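/- arXiv:2602.19579 — 5 statements merged into one kernel-verified Lean document; each statement's English description precedes it below -/
import Mathlib

section
/- Let d ≥ 1, let K be a complete separable metric space, and let N be a Borel measure on ℝ^d × K taking values in ℤ≥0 ∪ {∞} on every Borel set, such that N(A × K) < ∞ for every bounded Borel set A ⊆ ℝ^d and N({x} × K) ≤ 1 for every x ∈ ℝ^d. Then the support of N (the set of points every open neighborhood of which has positive N-measure) is the graph of a function from a locally finite subset of ℝ^d into K, this support is a closed, locally finite subset of ℝ^d × K, N equals the sum of the Dirac measures at the points of its support, and consequently N(A) = #(supp N ∩ A) for every Borel set A ⊆ ℝ^d × K. Moreover, the projection of supp N to ℝ^d (i.e. {x ∈ ℝ^d : (x,k) ∈ supp N for some k ∈ K}) equals the support of the marginal measure A ↦ N(A × K). -/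
open MeasureTheory Filter Topology Metric Set
open scoped ENNReal

/-- The support of a Borel measure: the set of points every open neighborhood of which
has positive measure. -/
def measureSupport {X : Type*} [TopologicalSpace X] [MeasurableSpace X]
    (μ : MeasureTheory.Measure X) : Set X :=
  {p | ∀ U : Set X, IsOpen U → p ∈ U → 0 < μ U}

/-!
Integrality makes every point of the support carry mass at least one: its mass is the limit of
the masses of shrinking closed balls around it, each of which is a positive integer or `∞`.
The bound on the fibres `{x} × K` caps this mass at one, so counting points of mass one shows
that the support meets each fibre at most once and each bounded cylinder `A × K` finitely
often. The support is therefore countable, and its complement is null because `ℝ^d × K` is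
second countable; hence `N` counts the points of its support. Finally the projection of the
support is locally finite, hence closed, and the cylinder over its complement misses the support.
-/

namespace MeasureTheory

theorem measureSupport_eq_support {X : Type*} [TopologicalSpace X] [MeasurableSpace X]
    (μ : Measure X) : measureSupport μ = μ.support := by
  rw [Measure.support_eq_forall_isOpen]
  exact ext fun _ => forall_congr' fun _ => imp.swap

section Counting

variable {α : Type*} [MeasurableSpace α]

theorem sum_dirac_subtype_apply (S : Set α) {A : Set α} (hA : MeasurableSet A) :
    Measure.sum (fun p : S => Measure.dirac (p : α)) A = ((S ∩ A).encard : ℝ≥0∞) := by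
  rw [Measure.sum_apply _ hA, ← ENNReal.tsum_set_one]
  simp only [Measure.dirac_apply' _ hA]
  rw [tsum_subtype S (A.indicator 1), indicator_indicator]
  exact (tsum_subtype (S ∩ A) 1).symm

variable [MeasurableSingletonClass α] {μ : Measure α}

theorem encard_le_measure_of_one_le_measure_singleton {T : Set α} (h : ∀ p ∈ T, 1 ≤ μ {p}) :
    (T.encard : ℝ≥0∞) ≤ μ T := by
  have hfinset : ∀ F : Finset α, ↑F ⊆ T → (F.card : ℝ≥0∞) ≤ μ T := fun F hF =>
    calc (F.card : ℝ≥0∞) = ∑ _ ∈ F, 1 := by simp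
      _ ≤ ∑ p ∈ F, μ {p} := Finset.sum_le_sum fun p hp => h p (hF hp)
      _ = μ F := sum_measure_singleton
      _ ≤ μ T := measure_mono hF
  rcases T.finite_or_infinite with hT | hT
  · simpa [hT.encard_eq_coe_toFinset_card] using hfinset hT.toFinset (by simp)
  · rw [hT.encard_eq, ENat.toENNReal_top, top_le_iff]
    refine ENNReal.eq_top_of_forall_nnreal_le fun r => ?_
    obtain ⟨n, hn⟩ := exists_nat_ge r
    obtain ⟨F, hFT, hF⟩ := hT.exists_subset_card_eq n
    calc (r : ℝ≥0∞) ≤ n := by exact_mod_cast hn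
      _ ≤ μ T := hF ▸ hfinset F hFT

theorem _root_.Set.Finite.of_measure_lt_top {T : Set α} (h : ∀ p ∈ T, 1 ≤ μ {p})
    (hT : μ T < ∞) : T.Finite :=
  Set.encard_lt_top_iff.mp <| by
    exact_mod_cast (encard_le_measure_of_one_le_measure_singleton h).trans_lt hT

theorem _root_.Set.Subsingleton.of_measure_le_one {T : Set α} (h : ∀ p ∈ T, 1 ≤ μ {p})
    (hT : μ T ≤ 1) : T.Subsingleton := by
  rw [← Set.encard_le_one_iff_subsingleton]
  exact_mod_cast (encard_le_measure_of_one_le_measure_singleton h).trans hT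

theorem measure_eq_encard_inter {S : Set α} (hS : S.Countable) (hnull : μ Sᶜ = 0)
    (hmass : ∀ p ∈ S, μ {p} = 1) (A : Set α) : μ A = ((S ∩ A).encard : ℝ≥0∞) := by
  have hSA : (S ∩ A).Countable := hS.mono inter_subset_left
  calc μ A = μ (S ∩ A) := by rw [inter_comm, measure_inter_conull hnull]
    _ = ∑' p : ↥(S ∩ A), μ {(p : α)} := by
        simpa using (tsum_measure_preimage_singleton hSA (f := id) (μ := μ)
          fun p _ => measurableSet_singleton p).symm
    _ = ∑' _ : ↥(S ∩ A), (1 : ℝ≥0∞) := tsum_congr fun p => hmass p p.2.1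
    _ = ((S ∩ A).encard : ℝ≥0∞) := ENNReal.tsum_set_one _

theorem eq_sum_dirac_of_measure_singleton_eq_one {S : Set α} (hS : S.Countable)
    (hnull : μ Sᶜ = 0) (hmass : ∀ p ∈ S, μ {p} = 1) :
    μ = Measure.sum (fun p : S => Measure.dirac (p : α)) :=
  Measure.ext fun A hA => by
    rw [measure_eq_encard_inter hS hnull hmass, sum_dirac_subtype_apply S hA]

end Counting

theorem one_le_measure_singleton_of_mem_support {X : Type*} [MetricSpace X] [MeasurableSpace X]
    [OpensMeasurableSpace X] {μ : Measure X}
    (hint : ∀ s : Set X, MeasurableSet s → (∃ n : ℕ, μ s = n) ∨ μ s = ⊤)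
    {p : X} (hp : p ∈ μ.support) (hfin : ∃ R > 0, μ (closedBall p R) ≠ ∞) :
    1 ≤ μ {p} := by
  have hball : ∀ r > 0, 1 ≤ μ (cthickening r {p}) := fun r hr => by
    rw [cthickening_singleton p hr.le]
    have hpos := (Measure.mem_support_iff_forall p).mp hp _ (closedBall_mem_nhds p hr)
    rcases hint _ measurableSet_closedBall with ⟨n, hn⟩ | htop
    · rw [hn] at hpos ⊢
      exact_mod_cast Nat.one_le_iff_ne_zero.mpr (by rintro rfl; simp at hpos)
    · simp [htop]
  obtain ⟨R, hR, hRfin⟩ := hfin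
  have hlim := tendsto_measure_cthickening (s := {p}) (μ := μ)
    ⟨R, hR, by rwa [cthickening_singleton p hR.le]⟩
  rw [closure_singleton] at hlim
  exact ge_of_tendsto (hlim.mono_left (nhdsWithin_le_nhds (s := Ioi 0)))
    (eventually_nhdsWithin_of_forall hball)

theorem isClosed_of_forall_isBounded_finite {X : Type*} [MetricSpace X] {D : Set X}
    (hD : ∀ B : Set X, Bornology.IsBounded B → (D ∩ B).Finite) : IsClosed D := by
  refine closure_subset_iff_isClosed.mp fun x hx => ?_
  have hxloc := isOpen_ball.inter_closure ⟨mem_ball_self one_pos, hx⟩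
  rw [inter_comm, (hD _ isBounded_ball).isClosed.closure_eq] at hxloc
  exact hxloc.1

section Product

variable {E K : Type*}

theorem measure_prod_univ_lt_top_of_isBounded [PseudoMetricSpace E] [MeasurableSpace E]
    [OpensMeasurableSpace E] [MeasurableSpace K] {μ : Measure (E × K)}
    (hfin : ∀ A : Set E, MeasurableSet A → Bornology.IsBounded A → μ (A ×ˢ univ) < ⊤)
    {A : Set E} (hA : Bornology.IsBounded A) : μ (A ×ˢ univ) < ⊤ :=
  (measure_mono (Set.prod_mono subset_closure le_rfl)).trans_lt
    (hfin _ isClosed_closure.measurableSet hA.closure)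

theorem _root_.Set.Countable.of_finite_inter_prod_univ [PseudoMetricSpace E] {T : Set (E × K)}
    (hT : ∀ A : Set E, Bornology.IsBounded A → (T ∩ A ×ˢ univ).Finite) : T.Countable := by
  rcases T.eq_empty_or_nonempty with rfl | ⟨p, -⟩
  · exact countable_empty
  have hcover : T = ⋃ n : ℕ, T ∩ closedBall p.1 n ×ˢ univ := by
    rw [← inter_iUnion, ← iUnion_prod_const, iUnion_closedBall_nat, univ_prod_univ, inter_univ]
  rw [hcover]
  exact countable_iUnion fun n => (hT _ isBounded_closedBall).countable

theorem measure_singleton_eq_one_of_mem_support [MetricSpace E] [MetricSpace K]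
    [MeasurableSpace (E × K)] [OpensMeasurableSpace (E × K)] {μ : Measure (E × K)}
    (hint : ∀ s : Set (E × K), MeasurableSet s → (∃ n : ℕ, μ s = n) ∨ μ s = ⊤)
    (hfin : ∀ A : Set E, Bornology.IsBounded A → μ (A ×ˢ univ) < ⊤)
    (hsingle : ∀ x : E, μ ({x} ×ˢ univ) ≤ 1) {p : E × K} (hp : p ∈ μ.support) :
    μ {p} = 1 := by
  have hpoint : {p} ⊆ {p.1} ×ˢ (univ : Set K) := singleton_subset_iff.mpr ⟨rfl, trivial⟩
  have hball : closedBall p 1 ⊆ closedBall p.1 1 ×ˢ (univ : Set K) := by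
    rw [← closedBall_prod_same]
    exact prod_mono le_rfl (subset_univ _)
  refine le_antisymm ((measure_mono hpoint).trans (hsingle p.1)) ?_
  exact one_le_measure_singleton_of_mem_support hint hp
    ⟨1, one_pos, ((measure_mono hball).trans_lt (hfin _ isBounded_closedBall)).ne⟩

theorem setOf_exists_mem_support_eq_of_isClosed [TopologicalSpace E] [TopologicalSpace K]
    [HereditarilyLindelofSpace (E × K)] [MeasurableSpace (E × K)] {μ : Measure (E × K)}
    (hclosed : IsClosed {x | ∃ k, (x, k) ∈ μ.support}) :
    {x | ∃ k, (x, k) ∈ μ.support} =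
      {x | ∀ U : Set E, IsOpen U → x ∈ U → 0 < μ (U ×ˢ univ)} := by
  ext x
  refine ⟨fun ⟨k, hk⟩ U hU hxU => ?_, fun hx => ?_⟩
  · exact (Measure.mem_support_iff_forall _).mp hk _
      ((hU.prod isOpen_univ).mem_nhds ⟨hxU, trivial⟩)
  · by_contra hxP
    refine (hx _ hclosed.isOpen_compl hxP).ne'
      (measure_mono_null ?_ Measure.measure_compl_support)
    rintro ⟨y, k⟩ ⟨hy, -⟩ hyk
    exact hy ⟨k, hyk⟩

end Product

end MeasureTheory

theorem stmt0_general {d : ℕ} {K : Type*} [MetricSpace K]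
    [TopologicalSpace.SeparableSpace K] [MeasurableSpace K] [BorelSpace K]
    (N : Measure ((EuclideanSpace ℝ (Fin d)) × K))
    (hint : ∀ s : Set ((EuclideanSpace ℝ (Fin d)) × K), MeasurableSet s →
      (∃ n : ℕ, N s = n) ∨ N s = ⊤)
    (hfin : ∀ A : Set (EuclideanSpace ℝ (Fin d)), MeasurableSet A → Bornology.IsBounded A →
      N (A ×ˢ (univ : Set K)) < ⊤)
    (hsingle : ∀ x : EuclideanSpace ℝ (Fin d), N ({x} ×ˢ (univ : Set K)) ≤ 1)
    (S : Set ((EuclideanSpace ℝ (Fin d)) × K)) (hS : S = measureSupport N) :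
    -- S is the graph of a K-valued function:
    (∀ x k k', (x, k) ∈ S → (x, k') ∈ S → k = k') ∧
    -- ... whose domain is a locally finite subset of ℝ^d:
    (∀ B : Set (EuclideanSpace ℝ (Fin d)), Bornology.IsBounded B →
      ({x | ∃ k, (x, k) ∈ S} ∩ B).Finite) ∧
    -- S is closed and locally finite in ℝ^d × K:
    IsClosed S ∧
    (∀ B : Set ((EuclideanSpace ℝ (Fin d)) × K), Bornology.IsBounded B → (S ∩ B).Finite) ∧
    -- N is the sum of the Dirac measures at the points of S:
    N = Measure.sum (fun p : S => Measure.dirac (p : (EuclideanSpace ℝ (Fin d)) × K)) ∧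
    -- consequently N(A) = #(S ∩ A) for every Borel A:
    (∀ A : Set ((EuclideanSpace ℝ (Fin d)) × K), MeasurableSet A →
      N A = ((S ∩ A).encard : ℝ≥0∞)) ∧
    -- the projection of S to ℝ^d is the support of the marginal measure A ↦ N(A × K):
    {x | ∃ k, (x, k) ∈ S} =
      {x | ∀ U : Set (EuclideanSpace ℝ (Fin d)), IsOpen U → x ∈ U →
        0 < N (U ×ˢ (univ : Set K))} := by
  rw [measureSupport_eq_support] at hS
  subst hS
  replace hfin : ∀ A, Bornology.IsBounded A → N (A ×ˢ univ) < ⊤ := fun _ hA =>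
    measure_prod_univ_lt_top_of_isBounded hfin hA
  have hmass : ∀ p ∈ N.support, N {p} = 1 := fun _ hp =>
    measure_singleton_eq_one_of_mem_support hint hfin hsingle hp
  have hlocfin : ∀ A, Bornology.IsBounded A → (N.support ∩ A ×ˢ univ).Finite := fun A hA =>
    .of_measure_lt_top (fun p hp => (hmass _ hp.1).ge)
      ((measure_mono inter_subset_right).trans_lt (hfin _ hA))
  have hcountable := Set.Countable.of_finite_inter_prod_univ hlocfin
  have hdom : ∀ B, Bornology.IsBounded B → ({x | ∃ k, (x, k) ∈ N.support} ∩ B).Finite :=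
    fun B hB => ((hlocfin B hB).image Prod.fst).subset
      fun x ⟨⟨k, hk⟩, hxB⟩ => ⟨(x, k), ⟨hk, hxB, trivial⟩, rfl⟩
  refine ⟨fun x k k' hk hk' => ?_, hdom, Measure.isClosed_support, fun B hB => ?_,
    eq_sum_dirac_of_measure_singleton_eq_one hcountable Measure.measure_compl_support hmass,
    fun A _ => measure_eq_encard_inter hcountable Measure.measure_compl_support hmass A,
    setOf_exists_mem_support_eq_of_isClosed (isClosed_of_forall_isBounded_finite hdom)⟩
  · have hfiber := Set.Subsingleton.of_measure_le_one (T := N.support ∩ {x} ×ˢ univ)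
      (fun p hp => (hmass _ hp.1).ge) ((measure_mono inter_subset_right).trans (hsingle x))
    exact congrArg Prod.snd (hfiber ⟨hk, rfl, trivial⟩ ⟨hk', rfl, trivial⟩)
  · exact (hlocfin _ hB.image_fst).subset
      fun p ⟨hp, hpB⟩ => ⟨hp, ⟨p, hpB, rfl⟩, trivial⟩

theorem stmt0 {d : ℕ} (hd : 1 ≤ d) {K : Type*} [MetricSpace K] [CompleteSpace K]
    [TopologicalSpace.SeparableSpace K] [MeasurableSpace K] [BorelSpace K]
    (N : Measure ((EuclideanSpace ℝ (Fin d)) × K))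
    (hint : ∀ s : Set ((EuclideanSpace ℝ (Fin d)) × K), MeasurableSet s →
      (∃ n : ℕ, N s = n) ∨ N s = ⊤)
    (hfin : ∀ A : Set (EuclideanSpace ℝ (Fin d)), MeasurableSet A → Bornology.IsBounded A →
      N (A ×ˢ (univ : Set K)) < ⊤)
    (hsingle : ∀ x : EuclideanSpace ℝ (Fin d), N ({x} ×ˢ (univ : Set K)) ≤ 1)
    (S : Set ((EuclideanSpace ℝ (Fin d)) × K)) (hS : S = measureSupport N) :
    -- S is the graph of a K-valued function:
    (∀ x k k', (x, k) ∈ S → (x, k') ∈ S → k = k') ∧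
    -- ... whose domain is a locally finite subset of ℝ^d:
    (∀ B : Set (EuclideanSpace ℝ (Fin d)), Bornology.IsBounded B →
      ({x | ∃ k, (x, k) ∈ S} ∩ B).Finite) ∧
    -- S is closed and locally finite in ℝ^d × K:
    IsClosed S ∧
    (∀ B : Set ((EuclideanSpace ℝ (Fin d)) × K), Bornology.IsBounded B → (S ∩ B).Finite) ∧
    -- N is the sum of the Dirac measures at the points of S:
    N = Measure.sum (fun p : S => Measure.dirac (p : (EuclideanSpace ℝ (Fin d)) × K)) ∧
    -- consequently N(A) = #(S ∩ A) for every Borel A: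
    (∀ A : Set ((EuclideanSpace ℝ (Fin d)) × K), MeasurableSet A →
      N A = ((S ∩ A).encard : ℝ≥0∞)) ∧
    -- the projection of S to ℝ^d is the support of the marginal measure A ↦ N(A × K):
    {x | ∃ k, (x, k) ∈ S} =
      {x | ∀ U : Set (EuclideanSpace ℝ (Fin d)), IsOpen U → x ∈ U →
        0 < N (U ×ˢ (univ : Set K))} :=
  stmt0_general N hint hfin hsingle S hS
end

section
/- Let d ≥ 1, let A ⊆ ℝ^d be a bounded Borel set whose topological boundary has Lebesgue measure zero, let Φ ⊆ ℝ^d be locally finite, let h : Φ → ℝ be bounded, and let c ∈ ℝ. Assume: (i) for every compactly supported C¹ function ζ : ℝ^d → ℝ, ε^d Σ_{z ∈ Φ ∩ ε^{-1}A} h(z) ζ(εz) → c ∫_A ζ(x) dx as ε → 0; (ii) limsup_{ε → 0} ε^d Σ_{z ∈ Φ ∩ ε^{-1}A} |h(z)| < ∞; (iii) for each ε ∈ (0,1], I^ε ⊆ Φ ∩ ε^{-1}A with ε^d · #((Φ ∩ ε^{-1}A) \ I^ε) → 0; (iv) there are constants 0 < C₁ ≤ C₂ and radii r^ε_z with C₁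 ε ≤ r^ε_z ≤ C₂ ε for all z ∈ I^ε, such that the open balls U^ε_z := U_{r^ε_z}(εz), z ∈ I^ε, are pairwise disjoint. Then the functions g_ε := ε^d Σ_{z ∈ I^ε} h(z) χ_{U^ε_z} / |U^ε_z| are uniformly bounded in L^∞(ℝ^d), and for every ζ ∈ L¹(ℝ^d), ∫_{ℝ^d} g_ε ζ dx → c ∫_A ζ dx as ε → 0; that is, g_ε converges to c·χ_A weakly-* in L^∞(ℝ^d). -/
/-!
Testing `g_ε` against `ζ` replaces each value `h(z) ζ(εz)` of the sum in (i) by `h(z)` times the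
average of `ζ` over the ball `U^ε_z`. For uniformly continuous `ζ` the error is at most the
oscillation of `ζ` on scale `C₂ ε` times the bounded mass `ε^d Σ |h|` of (ii), and the points of
`Φ ∩ ε⁻¹A` outside `I^ε` contribute `O(ε^d #((Φ ∩ ε⁻¹A) \ I^ε)) → 0` by (iii); so (i) gives the
limit for smooth compactly supported `ζ`. Since the balls are disjoint and
`|U^ε_z| ≥ (C₁ ε)^d |U_1(0)|`, the `g_ε` are bounded uniformly, and a uniform bound extends the
convergence from this dense class to all of `L¹`.
-/

open MeasureTheory Filter Topology Metric Set Module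
open scoped ENNReal Pointwise

theorem tendsto_of_forall_approx {ι X : Type*} [PseudoMetricSpace X] {l : Filter ι} {u : ι → X}
    {L : X} (h : ∀ δ > 0, ∃ v : ι → X, ∃ L', Tendsto v l (𝓝 L') ∧
      (∀ᶠ i in l, dist (u i) (v i) ≤ δ) ∧ dist L' L ≤ δ) :
    Tendsto u l (𝓝 L) := by
  refine Metric.tendsto_nhds.2 fun δ hδ => ?_
  obtain ⟨v, L', hv, huv, hL'⟩ := h (δ / 3) (by positivity)
  filter_upwards [huv, Metric.tendsto_nhds.1 hv (δ / 3) (by positivity)] with i hui hvi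
  linarith [dist_triangle4 (u i) (v i) L' L]

theorem norm_finsum_mem_indicator_le {ι α F : Type*} [SeminormedAddCommGroup F] {s : Set ι}
    (hs : s.Finite) {U : ι → Set α} (hU : s.PairwiseDisjoint U) {a : ι → F} {M : ℝ}
    (hM : 0 ≤ M) (ha : ∀ i ∈ s, ‖a i‖ ≤ M) (x : α) :
    ‖∑ᶠ i ∈ s, (U i).indicator (fun _ => a i) x‖ ≤ M := by
  rw [finsum_mem_eq_finite_toFinset_sum _ hs]
  by_cases hx : ∃ i ∈ s, x ∈ U i
  · obtain ⟨i, hi, hxi⟩ := hx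
    rw [Finset.sum_eq_single_of_mem i (hs.mem_toFinset.2 hi) fun j hj hji =>
      indicator_of_notMem (fun hxj => disjoint_left.1 (hU (hs.mem_toFinset.1 hj) hi hji) hxj hxi) _,
      indicator_of_mem hxi]
    exact ha i hi
  · push Not at hx
    rwa [Finset.sum_eq_zero fun i hi => indicator_of_notMem (hx i (hs.mem_toFinset.1 hi)) _,
      norm_zero]

theorem abs_finsum_mem_sub_finsum_mem_le {ι : Type*} {s t : Set ι} (hs : s.Finite) (hts : t ⊆ s)
    {f : ι → ℝ} {M : ℝ} (hf : ∀ i ∈ s \ t, |f i| ≤ M) :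
    |∑ᶠ i ∈ s, f i - ∑ᶠ i ∈ t, f i| ≤ (s \ t).ncard * M := by
  have hst : (s \ t).Finite := hs.sdiff
  rw [← finsum_mem_add_sdiff hts hs, add_sub_cancel_left, finsum_mem_eq_finite_toFinset_sum _ hst,
    ncard_eq_toFinset_card _ hst, ← nsmul_eq_mul]
  exact (Finset.abs_sum_le_sum_abs _ _).trans
    (Finset.sum_le_card_nsmul _ _ _ fun i hi => hf i (hst.mem_toFinset.1 hi))

theorem integral_finsum_mem_indicator_mul {ι α : Type*} [MeasurableSpace α] {μ : Measure α}
    {s : Set ι} (hs : s.Finite) {U : ι → Set α} (hU : ∀ i, MeasurableSet (U i)) (a : ι → ℝ)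
    {ζ : α → ℝ} (hζ : Integrable ζ μ) :
    ∫ x, (∑ᶠ i ∈ s, (U i).indicator (fun _ => a i) x) * ζ x ∂μ =
      ∑ᶠ i ∈ s, a i * ∫ x in U i, ζ x ∂μ := by
  have hterm (i : ι) (x : α) :
      (U i).indicator (fun _ => a i) x * ζ x = (U i).indicator (fun y => a i * ζ y) x := by
    by_cases hx : x ∈ U i <;> simp [hx]
  simp only [finsum_mem_eq_finite_toFinset_sum _ hs, Finset.sum_mul, hterm]
  rw [integral_finsetSum _ fun i _ => (hζ.const_mul (a i)).indicator (hU i)]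
  simp only [integral_indicator (hU _), integral_const_mul]

theorem integral_indicator_const_mul {α : Type*} [MeasurableSpace α] {μ : Measure α} {A : Set α}
    (hA : MeasurableSet A) (c : ℝ) (ζ : α → ℝ) :
    ∫ x, A.indicator (fun _ => c) x * ζ x ∂μ = c * ∫ x in A, ζ x ∂μ := by
  rw [← integral_const_mul, ← integral_indicator hA]
  congr 1 with x
  by_cases hx : x ∈ A <;> simp [hx]

theorem dist_setAverage_le {α F : Type*} [MeasurableSpace α] {μ : Measure α}
    [NormedAddCommGroup F] [NormedSpace ℝ F] [CompleteSpace F] {t : Set α} (ht : MeasurableSet t)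
    (h0 : μ t ≠ 0) (htop : μ t ≠ ∞) {f : α → F} (hf : IntegrableOn f t μ) {y : F} {δ : ℝ}
    (hfy : ∀ x ∈ t, dist (f x) y ≤ δ) :
    dist (⨍ x in t, f x ∂μ) y ≤ δ :=
  (convex_closedBall y δ).set_average_mem isClosed_closedBall h0 htop
    (ae_restrict_of_forall_mem ht hfy) hf

theorem abs_integral_mul_sub_integral_mul_le {α : Type*} [MeasurableSpace α] {μ : Measure α}
    {g ζ ζ' : α → ℝ} {C : ℝ} (hg : AEStronglyMeasurable g μ) (hgC : ∀ x, |g x| ≤ C)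
    (hζ : Integrable ζ μ) (hζ' : Integrable ζ' μ) :
    |∫ x, g x * ζ x ∂μ - ∫ x, g x * ζ' x ∂μ| ≤ C * ∫ x, |ζ x - ζ' x| ∂μ := by
  have hbdd : ∀ᵐ x ∂μ, ‖g x‖ ≤ C := ae_of_all _ hgC
  rw [← integral_sub (hζ.bdd_mul hg hbdd) (hζ'.bdd_mul hg hbdd), ← integral_const_mul]
  refine abs_integral_le_integral_abs.trans <| integral_mono_of_nonneg
    (ae_of_all _ fun x => abs_nonneg _) ((hζ.sub hζ').abs.const_mul C) (ae_of_all _ fun x => ?_)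
  show |g x * ζ x - g x * ζ' x| ≤ C * |ζ x - ζ' x|
  rw [← mul_sub, abs_mul]
  exact mul_le_mul_of_nonneg_right (hgC x) (abs_nonneg _)

theorem tendsto_integral_mul_of_dense {ι α : Type*} {l : Filter ι} [MeasurableSpace α]
    {μ : Measure α} {g : ι → α → ℝ} {G : α → ℝ} {C : ℝ}
    (hg : ∀ᶠ i in l, AEStronglyMeasurable (g i) μ ∧ ∀ x, |g i x| ≤ C)
    (hG : AEStronglyMeasurable G μ) (hGC : ∀ x, |G x| ≤ C) {P : (α → ℝ) → Prop}
    (hP : ∀ ζ, Integrable ζ μ → ∀ δ > 0, ∃ ζ', P ζ' ∧ Integrable ζ' μ ∧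
      ∫ x, |ζ x - ζ' x| ∂μ ≤ δ)
    (hconv : ∀ ζ, P ζ → Tendsto (fun i => ∫ x, g i x * ζ x ∂μ) l (𝓝 (∫ x, G x * ζ x ∂μ)))
    {ζ : α → ℝ} (hζ : Integrable ζ μ) :
    Tendsto (fun i => ∫ x, g i x * ζ x ∂μ) l (𝓝 (∫ x, G x * ζ x ∂μ)) := by
  refine tendsto_of_forall_approx fun δ hδ => ?_
  obtain ⟨ζ', hPζ', hζ', hclose⟩ := hP ζ hζ (δ / (|C| + 1)) (by positivity)
  have hCδ : C * ∫ x, |ζ x - ζ' x| ∂μ ≤ δ := by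
    calc C * ∫ x, |ζ x - ζ' x| ∂μ ≤ (|C| + 1) * (δ / (|C| + 1)) :=
          mul_le_mul (by linarith [le_abs_self C]) hclose
            (integral_nonneg fun _ => abs_nonneg _) (by positivity)
      _ = δ := by field_simp
  refine ⟨_, _, hconv ζ' hPζ', ?_, ?_⟩
  · filter_upwards [hg] with i ⟨hgi, hgiC⟩
    rw [Real.dist_eq]
    exact (abs_integral_mul_sub_integral_mul_le hgi hgiC hζ hζ').trans hCδ
  · rw [Real.dist_eq, abs_sub_comm]
    exact (abs_integral_mul_sub_integral_mul_le hG hGC hζ hζ').trans hCδ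

theorem tendsto_mul_finsum_mem_sub_finsum_mem {κ ι : Type*} {l : Filter κ} {a : κ → ℝ}
    {P I : κ → Set ι} {f : κ → ι → ℝ} {M : ℝ} (hP : ∀ᶠ k in l, (P k).Finite)
    (hIP : ∀ᶠ k in l, I k ⊆ P k) (ha : ∀ᶠ k in l, 0 ≤ a k)
    (hf : ∀ᶠ k in l, ∀ z ∈ P k \ I k, |f k z| ≤ M)
    (hloss : Tendsto (fun k => a k * ((P k \ I k).ncard : ℝ)) l (𝓝 0)) :
    Tendsto (fun k => a k * ∑ᶠ z ∈ P k, f k z - a k * ∑ᶠ z ∈ I k, f k z) l (𝓝 0) := by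
  refine squeeze_zero_norm' ?_ (by simpa using hloss.mul_const M)
  filter_upwards [hP, hIP, ha, hf] with k hPk hIk hak hfk
  rw [← mul_sub, norm_mul, Real.norm_eq_abs, abs_of_nonneg hak, mul_assoc]
  exact mul_le_mul_of_nonneg_left (abs_finsum_mem_sub_finsum_mem_le hPk hIk hfk) hak

theorem MeasureTheory.Integrable.exists_contDiff_hasCompactSupport_integral_abs_sub_le
    {E : Type*} [NormedAddCommGroup E] [NormedSpace ℝ E] [FiniteDimensional ℝ E]
    [MeasurableSpace E] [BorelSpace E] {μ : Measure E} [IsFiniteMeasureOnCompacts μ]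
    {ζ : E → ℝ} (hζ : Integrable ζ μ) {δ : ℝ} (hδ : 0 < δ) :
    ∃ ζ', (ContDiff ℝ (⊤ : ℕ∞) ζ' ∧ HasCompactSupport ζ') ∧ Integrable ζ' μ ∧
      ∫ x, |ζ x - ζ' x| ∂μ ≤ δ := by
  obtain ⟨ζ', hζ's, hζ'd, hclose⟩ :=
    (memLp_one_iff_integrable.2 hζ).exist_eLpNorm_sub_le ENNReal.one_ne_top le_rfl hδ
  have hζ'i : Integrable ζ' μ := hζ'd.continuous.integrable_of_hasCompactSupport hζ's
  refine ⟨ζ', ⟨hζ'd, hζ's⟩, hζ'i, ?_⟩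
  rw [eLpNorm_one_eq_lintegral_enorm] at hclose
  have := ENNReal.toReal_le_of_le_ofReal hδ.le hclose
  rwa [← integral_norm_eq_lintegral_enorm (hζ.sub hζ'i).aestronglyMeasurable] at this

section BallSmearing

variable {E : Type*} [NormedAddCommGroup E] [NormedSpace ℝ E] [MeasurableSpace E] [BorelSpace E]
  {μ : Measure E} {n : ℕ}

/-- The function `g ε` of the statement is `ballSmearing volume d (I ε) h (r ε) ε`. -/
noncomputable def ballSmearing (μ : Measure E) (n : ℕ) (I : Set E) (w r : E → ℝ) (ε : ℝ)
    (x : E) : ℝ :=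
  ε ^ n * ∑ᶠ z ∈ I, (ball (ε • z) (r z)).indicator (fun _ => w z / μ.real (ball (ε • z) (r z))) x

theorem measurable_ballSmearing {I : Set E} (hI : I.Finite) (w r : E → ℝ) (ε : ℝ) :
    Measurable (ballSmearing μ n I w r ε) := by
  unfold ballSmearing
  simp only [finsum_mem_eq_finite_toFinset_sum _ hI]
  exact (Finset.measurable_sum _ fun z _ =>
    measurable_const.indicator measurableSet_ball).const_mul _

theorem integral_ballSmearing_mul {I : Set E} (hI : I.Finite) (w r : E → ℝ) (ε : ℝ) {ζ : E → ℝ}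
    (hζ : Integrable ζ μ) :
    ∫ x, ballSmearing μ n I w r ε x * ζ x ∂μ =
      ε ^ n * ∑ᶠ z ∈ I, w z * ⨍ x in ball (ε • z) (r z), ζ x ∂μ := by
  simp only [ballSmearing, mul_assoc]
  rw [integral_const_mul, integral_finsum_mem_indicator_mul hI (fun _ => measurableSet_ball) _ hζ]
  congr 1
  refine finsum_mem_congr rfl fun z _ => ?_
  rw [setAverage_eq, smul_eq_mul]
  ring

theorem pow_mul_measureReal_ball_le [FiniteDimensional ℝ E] (μ : Measure E) [μ.IsAddHaarMeasure]
    (x : E) {ρ r : ℝ} (hρ : 0 < ρ) (hρr : ρ ≤ r) :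
    ρ ^ finrank ℝ E * μ.real (ball 0 1) ≤ μ.real (ball x r) := by
  rw [measureReal_def, measureReal_def, Measure.addHaar_ball_of_pos μ x (hρ.trans_le hρr),
    ENNReal.toReal_mul, ENNReal.toReal_ofReal (pow_nonneg (hρ.le.trans hρr) _)]
  gcongr

theorem abs_ballSmearing_le [FiniteDimensional ℝ E] [μ.IsAddHaarMeasure] {I : Set E}
    {w r : E → ℝ} {ε C₁ M : ℝ} (hI : I.Finite) (hε : 0 < ε) (hC₁ : 0 < C₁) (hM : 0 ≤ M)
    (hw : ∀ z ∈ I, |w z| ≤ M) (hr : ∀ z ∈ I, C₁ * ε ≤ r z)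
    (hdisj : I.PairwiseDisjoint fun z => ball (ε • z) (r z)) (x : E) :
    |ballSmearing μ (finrank ℝ E) I w r ε x| ≤ M / (C₁ ^ finrank ℝ E * μ.real (ball 0 1)) := by
  have hω : 0 < μ.real (ball (0 : E) 1) :=
    ENNReal.toReal_pos (measure_ball_pos μ _ one_pos).ne' measure_ball_lt_top.ne
  have hterm : ∀ z ∈ I, ‖w z / μ.real (ball (ε • z) (r z))‖ ≤
      M / ((C₁ * ε) ^ finrank ℝ E * μ.real (ball 0 1)) := fun z hz => by
    rw [Real.norm_eq_abs, abs_div, abs_of_nonneg measureReal_nonneg]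
    exact div_le_div₀ hM (hw z hz) (by positivity)
      (pow_mul_measureReal_ball_le μ _ (by positivity) (hr z hz))
  rw [ballSmearing, abs_mul, abs_of_pos (pow_pos hε _)]
  calc ε ^ finrank ℝ E * |∑ᶠ z ∈ I, (ball (ε • z) (r z)).indicator
          (fun _ => w z / μ.real (ball (ε • z) (r z))) x|
      ≤ ε ^ finrank ℝ E * (M / ((C₁ * ε) ^ finrank ℝ E * μ.real (ball 0 1))) :=
        mul_le_mul_of_nonneg_left (norm_finsum_mem_indicator_le hI hdisj (by positivity) hterm x)
          (by positivity)
    _ = M / (C₁ ^ finrank ℝ E * μ.real (ball 0 1)) := by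
        rw [mul_pow]
        field_simp

variable [ProperSpace E] [IsFiniteMeasureOnCompacts μ] [μ.IsOpenPosMeasure]

theorem eventually_forall_dist_setAverage_ball_le {I : ℝ → Set E} {r : ℝ → E → ℝ} {C₂ : ℝ}
    (hr : ∀ᶠ ε in 𝓝[>] 0, ∀ z ∈ I ε, 0 < r ε z ∧ r ε z ≤ C₂ * ε) {ζ : E → ℝ}
    (hζ : UniformContinuous ζ) {δ : ℝ} (hδ : 0 < δ) :
    ∀ᶠ ε in 𝓝[>] 0, ∀ z ∈ I ε, dist (⨍ x in ball (ε • z) (r ε z), ζ x ∂μ) (ζ (ε • z)) ≤ δ := by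
  obtain ⟨η, hη, hζη⟩ := Metric.uniformContinuous_iff.1 hζ δ hδ
  have hradius : ∀ᶠ ε in 𝓝[>] (0 : ℝ), C₂ * ε < η := by
    have : Tendsto (fun ε : ℝ => C₂ * ε) (𝓝[>] 0) (𝓝 0) := by
      simpa using ((continuous_const_mul C₂).tendsto 0).mono_left nhdsWithin_le_nhds
    exact this.eventually_lt_const hη
  filter_upwards [hr, hradius] with ε hrε hε z hz
  obtain ⟨hr0, hrC⟩ := hrε z hz
  exact dist_setAverage_le measurableSet_ball (measure_ball_pos μ _ hr0).ne'
    measure_ball_lt_top.ne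
    ((hζ.continuous.continuousOn.integrableOn_compact (isCompact_closedBall _ _)).mono_set
      ball_subset_closedBall)
    fun x hx => (hζη (((mem_ball.1 hx).trans_le hrC).trans hε)).le

theorem tendsto_integral_ballSmearing_mul_sub_finsum {I : ℝ → Set E} {w : E → ℝ}
    {r : ℝ → E → ℝ} {C₂ C : ℝ} (hI : ∀ᶠ ε in 𝓝[>] 0, (I ε).Finite)
    (hr : ∀ᶠ ε in 𝓝[>] 0, ∀ z ∈ I ε, 0 < r ε z ∧ r ε z ≤ C₂ * ε)
    (hmass : ∀ᶠ ε in 𝓝[>] 0, ε ^ n * ∑ᶠ z ∈ I ε, |w z| ≤ C) {ζ : E → ℝ}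
    (hζ : UniformContinuous ζ) (hζi : Integrable ζ μ) :
    Tendsto (fun ε => ∫ x, ballSmearing μ n (I ε) w (r ε) ε x * ζ x ∂μ -
      ε ^ n * ∑ᶠ z ∈ I ε, w z * ζ (ε • z)) (𝓝[>] 0) (𝓝 0) := by
  refine Metric.tendsto_nhds.2 fun δ hδ => ?_
  set η := δ / (|C| + 1) with hη
  have hηC : η * C < δ := by
    calc η * C ≤ η * |C| := mul_le_mul_of_nonneg_left (le_abs_self C) (by positivity)
      _ < η * (|C| + 1) := by gcongr; linarith
      _ = δ := by rw [hη]; field_simp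
  filter_upwards [hI, hmass, eventually_forall_dist_setAverage_ball_le (μ := μ) hr hζ
    (show 0 < η by positivity), self_mem_nhdsWithin] with ε hIε hmassε havg hε
  rw [integral_ballSmearing_mul hIε _ _ _ hζi, ← mul_sub, ← finsum_mem_sub_distrib _ _ hIε,
    dist_zero_right, Real.norm_eq_abs, abs_mul, abs_of_pos (pow_pos hε n)]
  simp only [finsum_mem_eq_finite_toFinset_sum _ hIε] at hmassε ⊢
  calc ε ^ n * |∑ z ∈ hIε.toFinset,
        (w z * ⨍ x in ball (ε • z) (r ε z), ζ x ∂μ - w z * ζ (ε • z))|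
      ≤ ε ^ n * ∑ z ∈ hIε.toFinset, η * |w z| := by
        refine mul_le_mul_of_nonneg_left ((Finset.abs_sum_le_sum_abs _ _).trans
          (Finset.sum_le_sum fun z hz => ?_)) (pow_pos hε n).le
        rw [← mul_sub, abs_mul, mul_comm, ← Real.dist_eq]
        exact mul_le_mul_of_nonneg_right (havg z (hIε.mem_toFinset.1 hz)) (abs_nonneg _)
    _ = η * (ε ^ n * ∑ z ∈ hIε.toFinset, |w z|) := by rw [← Finset.mul_sum]; ring
    _ ≤ η * C := mul_le_mul_of_nonneg_left hmassε (by positivity)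
    _ < δ := hηC

theorem tendsto_integral_ballSmearing_mul {P I : ℝ → Set E} {w : E → ℝ} {r : ℝ → E → ℝ}
    {ζ : E → ℝ} {L C M Mζ C₂ : ℝ} (hP : ∀ ε, (P ε).Finite) (hIP : ∀ᶠ ε in 𝓝[>] 0, I ε ⊆ P ε)
    (hw : ∀ ε, ∀ z ∈ P ε, |w z| ≤ M)
    (hr : ∀ᶠ ε in 𝓝[>] 0, ∀ z ∈ I ε, 0 < r ε z ∧ r ε z ≤ C₂ * ε)
    (hζ : UniformContinuous ζ) (hζb : ∀ x, |ζ x| ≤ Mζ) (hζi : Integrable ζ μ)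
    (hlim : Tendsto (fun ε => ε ^ n * ∑ᶠ z ∈ P ε, w z * ζ (ε • z)) (𝓝[>] 0) (𝓝 L))
    (hmass : ∀ᶠ ε in 𝓝[>] 0, ε ^ n * ∑ᶠ z ∈ P ε, |w z| ≤ C)
    (hloss : Tendsto (fun ε => ε ^ n * ((P ε \ I ε).ncard : ℝ)) (𝓝[>] 0) (𝓝 0)) :
    Tendsto (fun ε => ∫ x, ballSmearing μ n (I ε) w (r ε) ε x * ζ x ∂μ) (𝓝[>] 0) (𝓝 L) := by
  have hpos : ∀ᶠ ε in 𝓝[>] (0 : ℝ), 0 ≤ ε ^ n :=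
    eventually_nhdsWithin_of_forall fun ε hε => pow_nonneg (le_of_lt hε) n
  have hmassI : ∀ᶠ ε in 𝓝[>] 0, ε ^ n * ∑ᶠ z ∈ I ε, |w z| ≤ C := by
    filter_upwards [hIP, hmass, hpos] with ε hIε hmassε hε
    refine le_trans (mul_le_mul_of_nonneg_left ?_ hε) hmassε
    rw [← finsum_mem_add_sdiff hIε (hP ε), le_add_iff_nonneg_right]
    exact finsum_nonneg fun z => finsum_nonneg fun _ => abs_nonneg _
  have hsmear := tendsto_integral_ballSmearing_mul_sub_finsum (μ := μ)
    (hIP.mono fun ε hIε => (hP ε).subset hIε) hr hmassI hζ hζi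
  have htail := tendsto_mul_finsum_mem_sub_finsum_mem (f := fun ε z => w z * ζ (ε • z))
    (M := M * Mζ) (Eventually.of_forall hP) hIP hpos
    (Eventually.of_forall fun ε z hz => by
      rw [abs_mul]
      exact mul_le_mul (hw ε z hz.1) (hζb _) (abs_nonneg _) ((abs_nonneg _).trans (hw ε z hz.1)))
    hloss
  simpa using (hsmear.sub htail).add hlim

end BallSmearing

theorem stmt6_general {d : ℕ}
    (A : Set (EuclideanSpace ℝ (Fin d))) (hAmeas : MeasurableSet A)
    (hAbdd : Bornology.IsBounded A)
    (Φ : Set (EuclideanSpace ℝ (Fin d)))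
    -- Φ is locally finite:
    (hΦ : ∀ B : Set (EuclideanSpace ℝ (Fin d)), Bornology.IsBounded B → (Φ ∩ B).Finite)
    -- h is bounded:
    (h : EuclideanSpace ℝ (Fin d) → ℝ) (hhbdd : ∃ Ch : ℝ, ∀ z ∈ Φ, |h z| ≤ Ch)
    (c : ℝ)
    -- (i) convergence of the empirical sums against C¹ test functions:
    (hi : ∀ ζ : EuclideanSpace ℝ (Fin d) → ℝ, ContDiff ℝ 1 ζ → HasCompactSupport ζ →
      Tendsto (fun ε : ℝ => ε ^ d * ∑ᶠ z ∈ Φ ∩ ε⁻¹ • A, h z * ζ (ε • z)) (𝓝[>] (0:ℝ))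
        (𝓝 (c * ∫ x in A, ζ x)))
    -- (ii) the sums of |h| stay bounded as ε → 0:
    (hii : ∃ C : ℝ, ∀ᶠ ε in 𝓝[>] (0:ℝ), ε ^ d * ∑ᶠ z ∈ Φ ∩ ε⁻¹ • A, |h z| ≤ C)
    -- (iii) the sets I^ε exhaust Φ ∩ ε⁻¹A asymptotically:
    (I : ℝ → Set (EuclideanSpace ℝ (Fin d)))
    (hI : ∀ ε ∈ Set.Ioc (0:ℝ) 1, I ε ⊆ Φ ∩ ε⁻¹ • A)
    (hiii : Tendsto (fun ε : ℝ => ε ^ d * (((Φ ∩ ε⁻¹ • A) \ I ε).ncard : ℝ))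
      (𝓝[>] (0:ℝ)) (𝓝 0))
    -- (iv) radii comparable to ε with pairwise disjoint balls:
    (C₁ C₂ : ℝ) (hC₁ : 0 < C₁)
    (r : ℝ → EuclideanSpace ℝ (Fin d) → ℝ)
    (hr : ∀ ε ∈ Set.Ioc (0:ℝ) 1, ∀ z ∈ I ε, C₁ * ε ≤ r ε z ∧ r ε z ≤ C₂ * ε)
    (hdisj : ∀ ε ∈ Set.Ioc (0:ℝ) 1, ∀ z ∈ I ε, ∀ z' ∈ I ε, z ≠ z' →
      Disjoint (Metric.ball (ε • z) (r ε z)) (Metric.ball (ε • z') (r ε z')))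
    -- g_ε := ε^d Σ_{z ∈ I^ε} h(z) χ_{U^ε_z} / |U^ε_z| :
    (g : ℝ → EuclideanSpace ℝ (Fin d) → ℝ)
    (hg : g = fun ε x => ε ^ d * ∑ᶠ z ∈ I ε,
      (Metric.ball (ε • z) (r ε z)).indicator
        (fun _ => h z / (volume (Metric.ball (ε • z) (r ε z))).toReal) x) :
    -- the g_ε are uniformly bounded in L^∞ ...
    (∃ C : ℝ, ∀ ε ∈ Set.Ioc (0:ℝ) 1, ∀ x, |g ε x| ≤ C) ∧
    -- ... and converge to c·χ_A weakly-* in L^∞, i.e. against every ζ ∈ L¹: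
    (∀ ζ : EuclideanSpace ℝ (Fin d) → ℝ, Integrable ζ →
      Tendsto (fun ε : ℝ => ∫ x, g ε x * ζ x) (𝓝[>] (0:ℝ)) (𝓝 (c * ∫ x in A, ζ x))) := by
  obtain rfl : g = fun ε => ballSmearing volume d (I ε) h (r ε) ε := hg
  obtain ⟨Ch, hCh⟩ := hhbdd
  obtain ⟨Cmass, hmass⟩ := hii
  have hfin (ε : ℝ) : (Φ ∩ ε⁻¹ • A).Finite := hΦ _ (hAbdd.smul₀ _)
  have hunit : ∀ᶠ ε in 𝓝[>] (0 : ℝ), ε ∈ Ioc (0 : ℝ) 1 := Ioc_mem_nhdsGT one_pos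
  have hIfin : ∀ ε ∈ Ioc (0 : ℝ) 1, (I ε).Finite := fun ε hε => (hfin ε).subset (hI ε hε)
  set Cg := max Ch 0 / (C₁ ^ d * volume.real (ball (0 : EuclideanSpace ℝ (Fin d)) 1))
  have hbound : ∀ ε ∈ Ioc (0 : ℝ) 1, ∀ x, |ballSmearing volume d (I ε) h (r ε) ε x| ≤ Cg := by
    intro ε hε x
    have := abs_ballSmearing_le (μ := volume) (hIfin ε hε) hε.1 hC₁ (le_max_right Ch 0)
      (fun z hz => (hCh z (hI ε hε hz).1).trans (le_max_left _ _)) (fun z hz => (hr ε hε z hz).1)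
      (hdisj ε hε) x
    rwa [finrank_euclideanSpace_fin] at this
  refine ⟨⟨Cg, hbound⟩, fun ζ hζ => ?_⟩
  rw [← integral_indicator_const_mul hAmeas]
  refine tendsto_integral_mul_of_dense (C := max Cg |c|) ?_
    (measurable_const.indicator hAmeas).aestronglyMeasurable (fun x => ?_)
    (fun ζ hζ δ hδ => hζ.exists_contDiff_hasCompactSupport_integral_abs_sub_le hδ)
    (fun ζ' ⟨hζ'd, hζ's⟩ => ?_) hζ
  · filter_upwards [hunit] with ε hε
    exact ⟨(measurable_ballSmearing (hIfin ε hε) _ _ _).aestronglyMeasurable,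
      fun x => (hbound ε hε x).trans (le_max_left _ _)⟩
  · exact (norm_indicator_le_norm_self (fun _ => c) x).trans (le_max_right _ _)
  · obtain ⟨Mζ, hMζ⟩ := hζ'd.continuous.bounded_above_of_compact_support hζ's
    rw [integral_indicator_const_mul hAmeas]
    exact tendsto_integral_ballSmearing_mul hfin (hunit.mono hI) (fun ε z hz => hCh z hz.1)
      (hunit.mono fun ε hε z hz => ⟨(mul_pos hC₁ hε.1).trans_le (hr ε hε z hz).1, (hr ε hε z hz).2⟩)
      (hζ's.uniformContinuous_of_continuous hζ'd.continuous) hMζ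
      (hζ'd.continuous.integrable_of_hasCompactSupport hζ's)
      (hi ζ' (hζ'd.of_le (by exact_mod_cast le_top)) hζ's) hmass hiii

theorem stmt6 {d : ℕ} (hd : 1 ≤ d)
    (A : Set (EuclideanSpace ℝ (Fin d))) (hAmeas : MeasurableSet A)
    (hAbdd : Bornology.IsBounded A) (hAfr : volume (frontier A) = 0)
    (Φ : Set (EuclideanSpace ℝ (Fin d)))
    -- Φ is locally finite:
    (hΦ : ∀ B : Set (EuclideanSpace ℝ (Fin d)), Bornology.IsBounded B → (Φ ∩ B).Finite)
    -- h is bounded: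
    (h : EuclideanSpace ℝ (Fin d) → ℝ) (hhbdd : ∃ Ch : ℝ, ∀ z ∈ Φ, |h z| ≤ Ch)
    (c : ℝ)
    -- (i) convergence of the empirical sums against C¹ test functions:
    (hi : ∀ ζ : EuclideanSpace ℝ (Fin d) → ℝ, ContDiff ℝ 1 ζ → HasCompactSupport ζ →
      Tendsto (fun ε : ℝ => ε ^ d * ∑ᶠ z ∈ Φ ∩ ε⁻¹ • A, h z * ζ (ε • z)) (𝓝[>] (0:ℝ))
        (𝓝 (c * ∫ x in A, ζ x)))
    -- (ii) the sums of |h| stay bounded as ε → 0: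
    (hii : ∃ C : ℝ, ∀ᶠ ε in 𝓝[>] (0:ℝ), ε ^ d * ∑ᶠ z ∈ Φ ∩ ε⁻¹ • A, |h z| ≤ C)
    -- (iii) the sets I^ε exhaust Φ ∩ ε⁻¹A asymptotically:
    (I : ℝ → Set (EuclideanSpace ℝ (Fin d)))
    (hI : ∀ ε ∈ Set.Ioc (0:ℝ) 1, I ε ⊆ Φ ∩ ε⁻¹ • A)
    (hiii : Tendsto (fun ε : ℝ => ε ^ d * (((Φ ∩ ε⁻¹ • A) \ I ε).ncard : ℝ))
      (𝓝[>] (0:ℝ)) (𝓝 0))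
    -- (iv) radii comparable to ε with pairwise disjoint balls:
    (C₁ C₂ : ℝ) (hC₁ : 0 < C₁) (hC₁₂ : C₁ ≤ C₂)
    (r : ℝ → EuclideanSpace ℝ (Fin d) → ℝ)
    (hr : ∀ ε ∈ Set.Ioc (0:ℝ) 1, ∀ z ∈ I ε, C₁ * ε ≤ r ε z ∧ r ε z ≤ C₂ * ε)
    (hdisj : ∀ ε ∈ Set.Ioc (0:ℝ) 1, ∀ z ∈ I ε, ∀ z' ∈ I ε, z ≠ z' →
      Disjoint (Metric.ball (ε • z) (r ε z)) (Metric.ball (ε • z') (r ε z')))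
    -- g_ε := ε^d Σ_{z ∈ I^ε} h(z) χ_{U^ε_z} / |U^ε_z| :
    (g : ℝ → EuclideanSpace ℝ (Fin d) → ℝ)
    (hg : g = fun ε x => ε ^ d * ∑ᶠ z ∈ I ε,
      (Metric.ball (ε • z) (r ε z)).indicator
        (fun _ => h z / (volume (Metric.ball (ε • z) (r ε z))).toReal) x) :
    -- the g_ε are uniformly bounded in L^∞ ...
    (∃ C : ℝ, ∀ ε ∈ Set.Ioc (0:ℝ) 1, ∀ x, |g ε x| ≤ C) ∧
    -- ... and converge to c·χ_A weakly-* in L^∞, i.e. against every ζ ∈ L¹: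
    (∀ ζ : EuclideanSpace ℝ (Fin d) → ℝ, Integrable ζ →
      Tendsto (fun ε : ℝ => ∫ x, g ε x * ζ x) (𝓝[>] (0:ℝ)) (𝓝 (c * ∫ x in A, ζ x))) :=
  stmt6_general A hAmeas hAbdd Φ hΦ h hhbdd c hi hii I hI hiii C₁ C₂ hC₁ r hr hdisj g hg
end

section
/- Let d ≥ 1, let A ⊆ ℝ^d be a bounded Borel set whose topological boundary has Lebesgue measure zero, let Φ ⊆ ℝ^d be locally finite, let h : Φ → ℝ be bounded, and let c ∈ ℝ. Assume: (i) for every compactly supported C¹ function ζ : ℝ^d → ℝ, ε^d Σ_{z ∈ Φ ∩ ε^{-1}A} h(z) ζ(εz) → c ∫_A ζ(x) dx as ε → 0; (ii) limsup_{ε → 0} ε^d Σ_{z ∈ Φ ∩ ε^{-1}A} |h(z)| < ∞; (iii) for each ε ∈ (0,1], I^ε ⊆ Φ ∩ ε^{-1}A with ε^d · #((Φ ∩ ε^{-1}A) \ I^ε) → 0; (iv) there are constants 0 < C₁ ≤ C₂ and radii r^ε_z with C₁ ε ≤ r^ε_z ≤ C₂ ε for all z ∈ I^ε, such that the open balls U^ε_z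 := U_{r^ε_z}(εz), z ∈ I^ε, are pairwise disjoint. Then for every compactly supported C¹ function ζ : ℝ^d → ℝ, ε^d Σ_{z ∈ I^ε} h(z) · (1 / H^{d−1}(∂U^ε_z)) ∫_{∂U^ε_z} ζ dH^{d−1} → c ∫_A ζ(x) dx as ε → 0. -/
/-!
Around each `z ∈ I^ε`, the sphere average of a Lipschitz test function `ζ` differs from `ζ (ε • z)`
by at most `Lip(ζ) · r^ε_z ≤ Lip(ζ) C₂ ε`. By (ii), replacing the sphere averages by point values
therefore costs `O(ε)`; the points of `(Φ ∩ ε⁻¹A) \ I^ε` contribute at most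
`sup |h| · sup |ζ| · ε^d · #((Φ ∩ ε⁻¹A) \ I^ε)`, which tends to `0` by (iii), and (i) concludes.

The geometric input is that spheres have positive, finite `(d-1)`-dimensional Hausdorff measure:
positive since the orthogonal projection onto a hyperplane maps the sphere onto a `(d-1)`-ball,
finite since the sphere is covered by `2d` Lipschitz graphs over balls in coordinate hyperplanes.
-/

open MeasureTheory Filter Topology Metric Set Module
open scoped ENNReal NNReal Pointwise RealInnerProductSpace

lemma hausdorffMeasure_sphere_eq {E : Type*} [NormedAddCommGroup E] [MeasurableSpace E]
    [BorelSpace E] (d : ℝ) (hd : 0 ≤ d) (x : E) (ρ : ℝ) :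
    μH[d] (sphere x ρ) = μH[d] (sphere (0 : E) ρ) := by
  have hx : sphere x ρ = x +ᵥ sphere (0 : E) ρ := by rw [vadd_sphere, vadd_eq_add, add_zero]
  rw [hx, hausdorffMeasure_vadd x (Or.inl hd)]

section SphereHausdorff

variable {E : Type*} [NormedAddCommGroup E] [InnerProductSpace ℝ E]

noncomputable def sphereGraph (v : E) (ρ : ℝ) (w : (ℝ ∙ v)ᗮ) : E :=
  (w : E) + √(ρ ^ 2 - ‖w‖ ^ 2) • v

variable {v : E} {ρ : ℝ}

lemma orthogonalProjectionOnto_sphereGraph (w : (ℝ ∙ v)ᗮ) :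
    (ℝ ∙ v)ᗮ.orthogonalProjectionOnto (sphereGraph v ρ w) = w := by
  simp [sphereGraph, Submodule.orthogonalProjectionOnto_orthogonalComplement_singleton_eq_zero]

lemma sphereGraph_mem_sphere (hv : ‖v‖ = 1) {w : (ℝ ∙ v)ᗮ} (hw : ‖w‖ ≤ ρ) :
    sphereGraph v ρ w ∈ sphere (0 : E) ρ := by
  have hρ : 0 ≤ ρ := (norm_nonneg _).trans hw
  have horth : ⟪(w : E), √(ρ ^ 2 - ‖w‖ ^ 2) • v⟫ = 0 := by
    rw [inner_smul_right, Submodule.mem_orthogonal_singleton_iff_inner_left.1 w.2, mul_zero]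
  rw [mem_sphere_zero_iff_norm, ← sq_eq_sq₀ (norm_nonneg _) hρ, sphereGraph, sq,
    norm_add_sq_eq_norm_sq_add_norm_sq_of_inner_eq_zero _ _ horth, ← sq, ← sq, norm_smul, hv,
    mul_one, Real.norm_eq_abs, sq_abs, Real.sq_sqrt (by nlinarith [norm_nonneg w])]
  simp

lemma orthogonalProjectionOnto_add_inner_smul (hv : ‖v‖ = 1) (y : E) :
    ((ℝ ∙ v)ᗮ.orthogonalProjectionOnto y : E) + ⟪v, y⟫ • v = y := by
  rw [← Submodule.starProjection_unit_singleton ℝ hv, add_comm, ← Submodule.starProjection_apply]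
  exact Submodule.starProjection_add_starProjection_orthogonal y

lemma norm_orthogonalProjectionOnto_sq (hv : ‖v‖ = 1) (y : E) :
    ‖(ℝ ∙ v)ᗮ.orthogonalProjectionOnto y‖ ^ 2 = ‖y‖ ^ 2 - ⟪v, y⟫ ^ 2 := by
  rw [Submodule.norm_sq_eq_add_norm_sq_starProjection y (ℝ ∙ v),
    Submodule.starProjection_unit_singleton ℝ hv, norm_smul, hv, mul_one, Real.norm_eq_abs, sq_abs,
    Submodule.starProjection_apply, Submodule.coe_norm]
  ring

lemma sphereGraph_orthogonalProjectionOnto (hv : ‖v‖ = 1) {y : E} (hy : y ∈ sphere (0 : E) ρ)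
    (hvy : 0 ≤ ⟪v, y⟫) :
    sphereGraph v ρ ((ℝ ∙ v)ᗮ.orthogonalProjectionOnto y) = y := by
  rw [mem_sphere_zero_iff_norm] at hy
  rw [sphereGraph, norm_orthogonalProjectionOnto_sq hv, hy, sub_sub_cancel, Real.sqrt_sq hvy,
    orthogonalProjectionOnto_add_inner_smul hv]

lemma mem_image_sphereGraph (hv : ‖v‖ = 1) {y : E} (hy : y ∈ sphere (0 : E) ρ)
    (hvy : 0 ≤ ⟪v, y⟫) {c : ℝ} (hc : c ≤ ⟪v, y⟫ ^ 2) :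
    y ∈ sphereGraph v ρ '' closedBall 0 √(ρ ^ 2 - c) := by
  refine ⟨_, ?_, sphereGraph_orthogonalProjectionOnto hv hy hvy⟩
  rw [mem_closedBall_zero_iff]
  refine Real.le_sqrt_of_sq_le ?_
  rw [norm_orthogonalProjectionOnto_sq hv, mem_sphere_zero_iff_norm.1 hy]
  linarith

lemma sphere_subset_iUnion_image_sphereGraph {ι : Type*} [Fintype ι] [Nonempty ι]
    (b : OrthonormalBasis ι ℝ E) :
    sphere (0 : E) ρ ⊆ ⋃ j : ι ⊕ ι,
      sphereGraph (Sum.elim (⇑b) (-⇑b) j) ρ '' closedBall 0 √(ρ ^ 2 - ρ ^ 2 / Fintype.card ι) := by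
  intro y hy
  have hsum : ∑ _k : ι, ρ ^ 2 / Fintype.card ι ≤ ∑ k, ⟪b k, y⟫ ^ 2 := by
    have := b.sum_sq_norm_inner_right y
    simp only [Real.norm_eq_abs, sq_abs] at this
    rw [this, mem_sphere_zero_iff_norm.1 hy, Finset.sum_const, Finset.card_univ, nsmul_eq_mul,
      mul_div_cancel₀ _ (by positivity)]
  obtain ⟨k, -, hk⟩ := Finset.exists_le_of_sum_le Finset.univ_nonempty hsum
  rcases le_total 0 ⟪b k, y⟫ with hky | hky
  · exact mem_iUnion.2 ⟨.inl k, mem_image_sphereGraph (b.orthonormal.1 k) hy hky hk⟩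
  · refine mem_iUnion.2 ⟨.inr k, mem_image_sphereGraph (by simp [b.orthonormal.1 k]) hy
      (by simpa [inner_neg_left] using hky) (by simpa [inner_neg_left] using hk)⟩

variable [FiniteDimensional ℝ E]

lemma exists_lipschitzOnWith_sphereGraph {r : ℝ} (hr : r < ρ) :
    ∃ K, LipschitzOnWith K (sphereGraph v ρ) (closedBall 0 r) := by
  refine ContDiffOn.exists_lipschitzOnWith (n := 1) ?_ one_ne_zero (convex_closedBall _ _)
    (isCompact_closedBall _ _)
  intro w hw
  have hpos : ρ ^ 2 - ‖w‖ ^ 2 ≠ 0 := by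
    have : ‖w‖ ≤ r := by simpa using hw
    nlinarith [norm_nonneg w]
  apply ContDiffAt.contDiffWithinAt
  exact (Submodule.subtypeL _).contDiff.contDiffAt.add
    (((contDiffAt_const.sub (contDiff_norm_sq ℝ).contDiffAt).sqrt hpos).smul contDiffAt_const)

lemma cast_finrank_orthogonal_span_singleton (hv : v ≠ 0) :
    (finrank ℝ (ℝ ∙ v)ᗮ : ℝ) = finrank ℝ E - 1 := by
  have := (ℝ ∙ v).finrank_add_finrank_orthogonal
  rw [finrank_span_singleton hv] at this
  rw [← this]
  push_cast
  ring

variable [MeasurableSpace E] [BorelSpace E]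

lemma hausdorffMeasure_sphere_lt_top (hE : 0 < finrank ℝ E) (x : E) (hρ : 0 < ρ) :
    μH[(finrank ℝ E : ℝ) - 1] (sphere x ρ) < ∞ := by
  have hd : (0 : ℝ) ≤ finrank ℝ E - 1 := sub_nonneg.2 (Nat.one_le_cast.2 hE)
  have : Nonempty (Fin (finrank ℝ E)) := Fin.pos_iff_nonempty.1 hE
  set b := stdOrthonormalBasis ℝ E
  set r := √(ρ ^ 2 - ρ ^ 2 / Fintype.card (Fin (finrank ℝ E)))
  have hr : r < ρ := by
    rw [Real.sqrt_lt' hρ, Fintype.card_fin]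
    have : 0 < ρ ^ 2 / finrank ℝ E := by positivity
    linarith
  rw [hausdorffMeasure_sphere_eq _ hd]
  refine (measure_mono (sphere_subset_iUnion_image_sphereGraph b)).trans_lt <|
    (measure_iUnion_fintype_le _ _).trans_lt <| ENNReal.sum_lt_top.2 fun j _ => ?_
  set v := Sum.elim (⇑b) (-⇑b) j
  have hv : ‖v‖ = 1 := by cases j <;> simp [v, b.orthonormal.1 _]
  obtain ⟨K, hK⟩ := exists_lipschitzOnWith_sphereGraph (v := v) hr
  refine (hK.hausdorffMeasure_image_le hd).trans_lt <|
    ENNReal.mul_lt_top (ENNReal.rpow_lt_top_of_nonneg hd ENNReal.coe_ne_top) ?_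
  rw [← cast_finrank_orthogonal_span_singleton (norm_ne_zero_iff.1 (hv ▸ one_ne_zero))]
  exact measure_closedBall_lt_top

lemma hausdorffMeasure_sphere_pos (hE : 0 < finrank ℝ E) (x : E) (hρ : 0 < ρ) :
    0 < μH[(finrank ℝ E : ℝ) - 1] (sphere x ρ) := by
  have hd : (0 : ℝ) ≤ finrank ℝ E - 1 := sub_nonneg.2 (Nat.one_le_cast.2 hE)
  set v := stdOrthonormalBasis ℝ E ⟨0, hE⟩
  have hv : ‖v‖ = 1 := (stdOrthonormalBasis ℝ E).orthonormal.1 _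
  have hball : closedBall (0 : (ℝ ∙ v)ᗮ) ρ ⊆ (ℝ ∙ v)ᗮ.orthogonalProjectionOnto '' sphere 0 ρ :=
    fun w hw => ⟨sphereGraph v ρ w, sphereGraph_mem_sphere hv (mem_closedBall_zero_iff.1 hw),
      orthogonalProjectionOnto_sphereGraph w⟩
  rw [hausdorffMeasure_sphere_eq _ hd]
  calc (0 : ℝ≥0∞) < μH[(finrank ℝ E : ℝ) - 1] (closedBall (0 : (ℝ ∙ v)ᗮ) ρ) := by
        rw [← cast_finrank_orthogonal_span_singleton (norm_ne_zero_iff.1 (hv ▸ one_ne_zero))]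
        exact measure_closedBall_pos _ _ hρ
    _ ≤ μH[(finrank ℝ E : ℝ) - 1] ((ℝ ∙ v)ᗮ.orthogonalProjectionOnto '' sphere 0 ρ) :=
        measure_mono hball
    _ ≤ μH[(finrank ℝ E : ℝ) - 1] (sphere 0 ρ) :=
        hausdorffMeasure_orthogonalProjectionOnto_le _ _ _ hd

end SphereHausdorff

lemma abs_setAverage_sub_le {α : Type*} [MeasurableSpace α] {μ : Measure α} {s : Set α}
    (hs₀ : μ s ≠ 0) (hs : μ s ≠ ∞) {f : α → ℝ} (hf : AEStronglyMeasurable f μ) {a K : ℝ}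
    (hK : ∀ᵐ y ∂μ.restrict s, |f y - a| ≤ K) :
    |⨍ y in s, f y ∂μ - a| ≤ K := by
  have hm : 0 < μ.real s := ENNReal.toReal_pos hs₀ hs
  have hfi : IntegrableOn f s μ := Measure.integrableOn_of_bounded hs hf (M := |a| + K) <|
    hK.mono fun y hy => by
      rw [Real.norm_eq_abs]
      linarith [abs_sub_abs_le_abs_sub (f y) a]
  have hsub : ∫ y in s, (f y - a) ∂μ = μ.real s * (⨍ y in s, f y ∂μ - a) := by
    rw [integral_sub hfi (integrableOn_const hs), setIntegral_const, smul_eq_mul,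
      ← measure_smul_setAverage f hs, smul_eq_mul, mul_sub]
  have hbound := norm_setIntegral_le_of_norm_le_const_ae hs.lt_top (C := K) (f := fun y => f y - a)
    (by simpa only [Real.norm_eq_abs] using hK)
  rw [hsub, norm_mul, Real.norm_of_nonneg hm.le, Real.norm_eq_abs, mul_comm K] at hbound
  exact le_of_mul_le_mul_left hbound hm

lemma LipschitzWith.abs_setAverage_sphere_sub_le {E : Type*} [NormedAddCommGroup E]
    [MeasurableSpace E] [OpensMeasurableSpace E] {μ : Measure E} {x : E} {ρ : ℝ}
    (hρ₀ : μ (sphere x ρ) ≠ 0) (hρ : μ (sphere x ρ) ≠ ∞) {f : E → ℝ} {L : ℝ≥0}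
    (hf : LipschitzWith L f) :
    |⨍ y in sphere x ρ, f y ∂μ - f x| ≤ L * ρ := by
  refine abs_setAverage_sub_le hρ₀ hρ hf.continuous.aestronglyMeasurable <|
    ae_restrict_of_forall_mem isClosed_sphere.measurableSet fun y hy => ?_
  rw [← Real.dist_eq, ← mem_sphere.1 hy]
  exact hf.dist_le_mul y x

lemma Finset.abs_sum_sub_sum_le {α : Type*} [DecidableEq α] {F G : Finset α} (hGF : G ⊆ F)
    {a b w : α → ℝ} {δ K : ℝ} (hδ : 0 ≤ δ) (hab : ∀ z ∈ G, |a z - b z| ≤ δ * |w z|)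
    (hb : ∀ z ∈ F \ G, |b z| ≤ K) :
    |∑ z ∈ G, a z - ∑ z ∈ F, b z| ≤ δ * ∑ z ∈ F, |w z| + K * (F \ G).card := by
  rw [← Finset.sum_sdiff hGF, add_comm, ← sub_sub, ← Finset.sum_sub_distrib]
  refine (abs_sub _ _).trans (add_le_add ?_ ?_)
  · calc |∑ z ∈ G, (a z - b z)| ≤ ∑ z ∈ G, δ * |w z| :=
          (Finset.abs_sum_le_sum_abs _ _).trans (Finset.sum_le_sum hab)
      _ ≤ δ * ∑ z ∈ F, |w z| := by
          rw [← Finset.mul_sum]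
          gcongr
  · calc |∑ z ∈ F \ G, b z| ≤ ∑ _z ∈ F \ G, K :=
          (Finset.abs_sum_le_sum_abs _ _).trans (Finset.sum_le_sum hb)
      _ = K * (F \ G).card := by rw [Finset.sum_const, nsmul_eq_mul, mul_comm]

lemma abs_finsum_mem_sub_finsum_mem_le_s7 {α : Type*} {F G : Set α} (hF : F.Finite) (hGF : G ⊆ F)
    {a b w : α → ℝ} {δ K : ℝ} (hδ : 0 ≤ δ) (hab : ∀ z ∈ G, |a z - b z| ≤ δ * |w z|)
    (hb : ∀ z ∈ F \ G, |b z| ≤ K) :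
    |∑ᶠ z ∈ G, a z - ∑ᶠ z ∈ F, b z| ≤ δ * ∑ᶠ z ∈ F, |w z| + K * (F \ G).ncard := by
  classical
  lift F to Finset α using hF
  lift G to Finset α using F.finite_toSet.subset hGF
  rw [← Finset.coe_sdiff, Set.ncard_coe_finset] at *
  rw [finsum_mem_coe_finset, finsum_mem_coe_finset, finsum_mem_coe_finset]
  simp only [Finset.mem_coe] at hab hb
  exact Finset.abs_sum_sub_sum_le (Finset.coe_subset.1 hGF) hδ hab hb

lemma abs_finsum_mem_setAverage_sphere_sub_le {E : Type*} [NormedAddCommGroup E]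
    [InnerProductSpace ℝ E] [FiniteDimensional ℝ E] [MeasurableSpace E] [BorelSpace E]
    (hE : 0 < finrank ℝ E) {α : Type*} {P I : Set α} (hP : P.Finite) (hIP : I ⊆ P)
    {f : E → ℝ} {L : ℝ≥0} (hf : LipschitzWith L f) {M : ℝ} (hM : ∀ x, |f x| ≤ M)
    {h : α → ℝ} {Ch : ℝ} (hCh : ∀ z ∈ P, |h z| ≤ Ch) (c : α → E) {r : α → ℝ} {R : ℝ}
    (hR : 0 ≤ R) (hr : ∀ z ∈ I, 0 < r z ∧ r z ≤ R) :
    |∑ᶠ z ∈ I, h z * ⨍ y in sphere (c z) (r z), f y ∂μH[(finrank ℝ E : ℝ) - 1] -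
        ∑ᶠ z ∈ P, h z * f (c z)| ≤ L * R * ∑ᶠ z ∈ P, |h z| + Ch * M * (P \ I).ncard := by
  refine abs_finsum_mem_sub_finsum_mem_le_s7 hP hIP (by positivity) (fun z hz => ?_)
    (fun z hz => ?_)
  · obtain ⟨hr₀, hrR⟩ := hr z hz
    rw [← mul_sub, abs_mul, mul_comm]
    gcongr
    exact (hf.abs_setAverage_sphere_sub_le (hausdorffMeasure_sphere_pos hE _ hr₀).ne'
      (hausdorffMeasure_sphere_lt_top hE _ hr₀).ne).trans (by gcongr)
  · rw [abs_mul]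
    exact mul_le_mul (hCh z hz.1) (hM _) (abs_nonneg _) ((abs_nonneg _).trans (hCh z hz.1))

theorem stmt7_general {d : ℕ} (hd : 1 ≤ d)
    (A : Set (EuclideanSpace ℝ (Fin d)))
    (hAbdd : Bornology.IsBounded A)
    (Φ : Set (EuclideanSpace ℝ (Fin d)))
    -- Φ is locally finite:
    (hΦ : ∀ B : Set (EuclideanSpace ℝ (Fin d)), Bornology.IsBounded B → (Φ ∩ B).Finite)
    -- h is bounded:
    (h : EuclideanSpace ℝ (Fin d) → ℝ) (hhbdd : ∃ Ch : ℝ, ∀ z ∈ Φ, |h z| ≤ Ch)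
    (c : ℝ)
    -- (i) convergence of the empirical sums against C¹ test functions:
    (hi : ∀ ζ : EuclideanSpace ℝ (Fin d) → ℝ, ContDiff ℝ 1 ζ → HasCompactSupport ζ →
      Tendsto (fun ε : ℝ => ε ^ d * ∑ᶠ z ∈ Φ ∩ ε⁻¹ • A, h z * ζ (ε • z)) (𝓝[>] (0:ℝ))
        (𝓝 (c * ∫ x in A, ζ x)))
    -- (ii) the sums of |h| stay bounded as ε → 0:
    (hii : ∃ C : ℝ, ∀ᶠ ε in 𝓝[>] (0:ℝ), ε ^ d * ∑ᶠ z ∈ Φ ∩ ε⁻¹ • A, |h z| ≤ C)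
    -- (iii) the sets I^ε exhaust Φ ∩ ε⁻¹A asymptotically:
    (I : ℝ → Set (EuclideanSpace ℝ (Fin d)))
    (hI : ∀ ε ∈ Set.Ioc (0:ℝ) 1, I ε ⊆ Φ ∩ ε⁻¹ • A)
    (hiii : Tendsto (fun ε : ℝ => ε ^ d * (((Φ ∩ ε⁻¹ • A) \ I ε).ncard : ℝ))
      (𝓝[>] (0:ℝ)) (𝓝 0))
    -- (iv) radii comparable to ε with pairwise disjoint balls:
    (C₁ C₂ : ℝ) (hC₁ : 0 < C₁) (hC₁₂ : C₁ ≤ C₂)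
    (r : ℝ → EuclideanSpace ℝ (Fin d) → ℝ)
    (hr : ∀ ε ∈ Set.Ioc (0:ℝ) 1, ∀ z ∈ I ε, C₁ * ε ≤ r ε z ∧ r ε z ≤ C₂ * ε) :
    -- the sphere averages converge against every C¹ test function:
    ∀ ζ : EuclideanSpace ℝ (Fin d) → ℝ, ContDiff ℝ 1 ζ → HasCompactSupport ζ →
      Tendsto (fun ε : ℝ => ε ^ d * ∑ᶠ z ∈ I ε,
          h z * (μH[(d : ℝ) - 1] (Metric.sphere (ε • z) (r ε z))).toReal⁻¹ *
            ∫ x in Metric.sphere (ε • z) (r ε z), ζ x ∂(μH[(d : ℝ) - 1]))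
        (𝓝[>] (0:ℝ)) (𝓝 (c * ∫ x in A, ζ x)) := by
  intro ζ hζ hζc
  obtain ⟨L, hL⟩ := hζ.lipschitzWith_of_hasCompactSupport hζc one_ne_zero
  obtain ⟨M, hM⟩ := hζc.exists_bound_of_continuous hζ.continuous
  obtain ⟨Ch, hCh⟩ := hhbdd
  obtain ⟨C, hC⟩ := hii
  have hdim : finrank ℝ (EuclideanSpace ℝ (Fin d)) = d := finrank_euclideanSpace_fin
  simp_rw [mul_assoc, ← smul_eq_mul (a := (μH[_] _).toReal⁻¹), ← measureReal_def, ← setAverage_eq]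
  have hclose : ∀ᶠ ε in 𝓝[>] (0 : ℝ),
      ‖ε ^ d * ∑ᶠ z ∈ I ε, h z * ⨍ x in sphere (ε • z) (r ε z), ζ x ∂μH[(d : ℝ) - 1] -
          ε ^ d * ∑ᶠ z ∈ Φ ∩ ε⁻¹ • A, h z * ζ (ε • z)‖ ≤
        L * C₂ * C * ε + Ch * M * (ε ^ d * (((Φ ∩ ε⁻¹ • A) \ I ε).ncard : ℝ)) := by
    filter_upwards [hC, Ioc_mem_nhdsGT one_pos] with ε hCε hε
    have hLC₂ε : 0 ≤ L * C₂ * ε := mul_nonneg (mul_nonneg L.2 (hC₁.le.trans hC₁₂)) hε.1.le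
    have hεd : 0 ≤ ε ^ d := pow_nonneg hε.1.le d
    have key := abs_finsum_mem_setAverage_sphere_sub_le (hdim.symm ▸ hd)
      (hΦ _ (hAbdd.smul₀ ε⁻¹)) (hI ε hε) hL (M := M) (by simpa using hM)
      (fun z hz => hCh z hz.1) (ε • ·) (by nlinarith [hε.1])
      (fun z hz => ⟨by nlinarith [hr ε hε z hz, hε.1], (hr ε hε z hz).2⟩)
    rw [hdim] at key
    rw [← mul_sub, norm_mul, Real.norm_of_nonneg hεd, Real.norm_eq_abs]
    nlinarith [mul_le_mul_of_nonneg_left key hεd, mul_le_mul_of_nonneg_left hCε hLC₂ε]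
  have hbound : Tendsto (fun ε => L * C₂ * C * ε +
      Ch * M * (ε ^ d * (((Φ ∩ ε⁻¹ • A) \ I ε).ncard : ℝ))) (𝓝[>] 0) (𝓝 0) := by
    simpa using ((continuous_const_mul (L * C₂ * C : ℝ)).tendsto' 0 0 (mul_zero _)).mono_left
      nhdsWithin_le_nhds |>.add (hiii.const_mul (Ch * M))
  simpa using (squeeze_zero_norm' hclose hbound).add (hi ζ hζ hζc)

theorem stmt7 {d : ℕ} (hd : 1 ≤ d)
    (A : Set (EuclideanSpace ℝ (Fin d))) (hAmeas : MeasurableSet A)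
    (hAbdd : Bornology.IsBounded A) (hAfr : volume (frontier A) = 0)
    (Φ : Set (EuclideanSpace ℝ (Fin d)))
    -- Φ is locally finite:
    (hΦ : ∀ B : Set (EuclideanSpace ℝ (Fin d)), Bornology.IsBounded B → (Φ ∩ B).Finite)
    -- h is bounded:
    (h : EuclideanSpace ℝ (Fin d) → ℝ) (hhbdd : ∃ Ch : ℝ, ∀ z ∈ Φ, |h z| ≤ Ch)
    (c : ℝ)
    -- (i) convergence of the empirical sums against C¹ test functions:
    (hi : ∀ ζ : EuclideanSpace ℝ (Fin d) → ℝ, ContDiff ℝ 1 ζ → HasCompactSupport ζ →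
      Tendsto (fun ε : ℝ => ε ^ d * ∑ᶠ z ∈ Φ ∩ ε⁻¹ • A, h z * ζ (ε • z)) (𝓝[>] (0:ℝ))
        (𝓝 (c * ∫ x in A, ζ x)))
    -- (ii) the sums of |h| stay bounded as ε → 0:
    (hii : ∃ C : ℝ, ∀ᶠ ε in 𝓝[>] (0:ℝ), ε ^ d * ∑ᶠ z ∈ Φ ∩ ε⁻¹ • A, |h z| ≤ C)
    -- (iii) the sets I^ε exhaust Φ ∩ ε⁻¹A asymptotically:
    (I : ℝ → Set (EuclideanSpace ℝ (Fin d)))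
    (hI : ∀ ε ∈ Set.Ioc (0:ℝ) 1, I ε ⊆ Φ ∩ ε⁻¹ • A)
    (hiii : Tendsto (fun ε : ℝ => ε ^ d * (((Φ ∩ ε⁻¹ • A) \ I ε).ncard : ℝ))
      (𝓝[>] (0:ℝ)) (𝓝 0))
    -- (iv) radii comparable to ε with pairwise disjoint balls:
    (C₁ C₂ : ℝ) (hC₁ : 0 < C₁) (hC₁₂ : C₁ ≤ C₂)
    (r : ℝ → EuclideanSpace ℝ (Fin d) → ℝ)
    (hr : ∀ ε ∈ Set.Ioc (0:ℝ) 1, ∀ z ∈ I ε, C₁ * ε ≤ r ε z ∧ r ε z ≤ C₂ * ε)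
    (hdisj : ∀ ε ∈ Set.Ioc (0:ℝ) 1, ∀ z ∈ I ε, ∀ z' ∈ I ε, z ≠ z' →
      Disjoint (Metric.ball (ε • z) (r ε z)) (Metric.ball (ε • z') (r ε z'))) :
    -- the sphere averages converge against every C¹ test function:
    ∀ ζ : EuclideanSpace ℝ (Fin d) → ℝ, ContDiff ℝ 1 ζ → HasCompactSupport ζ →
      Tendsto (fun ε : ℝ => ε ^ d * ∑ᶠ z ∈ I ε,
          h z * (μH[(d : ℝ) - 1] (Metric.sphere (ε • z) (r ε z))).toReal⁻¹ *
            ∫ x in Metric.sphere (ε • z) (r ε z), ζ x ∂(μH[(d : ℝ) - 1]))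
        (𝓝[>] (0:ℝ)) (𝓝 (c * ∫ x in A, ζ x)) :=
  stmt7_general hd A hAbdd Φ hΦ h hhbdd c hi hii I hI hiii C₁ C₂ hC₁ hC₁₂ r hr
end

section
/- Let d ≥ 1, let Φ ⊆ ℝ^d be locally finite, and suppose there is L ∈ [0, ∞) such that for every bounded Borel set B ⊆ ℝ^d whose boundary has Lebesgue measure zero, ε^d · #(Φ ∩ ε^{-1}B) → L·|B| as ε → 0. Then for every bounded Borel set A ⊆ ℝ^d with |∂A| = 0, ε^d · #{z ∈ Φ : εz ∈ A and dist(εz, ℝ^d \ A) ≤ ε} → 0 as ε → 0. -/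
open MeasureTheory Filter Topology Metric Set
open scoped ENNReal Pointwise

theorem stmt11 {d : ℕ} (hd : 1 ≤ d)
    (Φ : Set (EuclideanSpace ℝ (Fin d)))
    -- Φ is locally finite:
    (hΦ : ∀ B : Set (EuclideanSpace ℝ (Fin d)), Bornology.IsBounded B → (Φ ∩ B).Finite)
    (L : ℝ) (hL : 0 ≤ L)
    -- ε^d #(Φ ∩ ε⁻¹B) → L·|B| for every bounded Borel continuity set B:
    (hconv : ∀ B : Set (EuclideanSpace ℝ (Fin d)), MeasurableSet B → Bornology.IsBounded B →
      volume (frontier B) = 0 →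
      Tendsto (fun ε : ℝ => ε ^ d * ((Φ ∩ ε⁻¹ • B).ncard : ℝ)) (𝓝[>] (0:ℝ))
        (𝓝 (L * (volume B).toReal))) :
    -- then the points εz ∈ A within distance ε of the complement of A vanish asymptotically:
    ∀ A : Set (EuclideanSpace ℝ (Fin d)), MeasurableSet A → Bornology.IsBounded A →
      volume (frontier A) = 0 →
      Tendsto (fun ε : ℝ =>
        ε ^ d * (({z ∈ Φ | ε • z ∈ A ∧ Metric.infDist (ε • z) Aᶜ ≤ ε}).ncard : ℝ))
        (𝓝[>] (0:ℝ)) (𝓝 0) := by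
  intro A hAm hAb hAf
  haveI : Nonempty (Fin d) := ⟨⟨0, hd⟩⟩
  -- Aᶜ is nonempty
  have hAc : Aᶜ.Nonempty := by
    rw [nonempty_compl]
    intro h
    exact NormedSpace.unbounded_univ ℝ (EuclideanSpace ℝ (Fin d)) (h ▸ hAb)
  -- the "collar" sets
  set T : ℝ → Set (EuclideanSpace ℝ (Fin d)) := fun δ => A ∩ {x | infDist x Aᶜ ≤ δ} with hT
  have hTmeas : ∀ δ, MeasurableSet (T δ) :=
    fun δ => hAm.inter ((isClosed_le (continuous_infDist_pt Aᶜ) continuous_const).measurableSet)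
  have hTbd : ∀ δ, Bornology.IsBounded (T δ) := fun δ => hAb.subset inter_subset_left
  have hTmono : ∀ ⦃δ₁ δ₂ : ℝ⦄, δ₁ ≤ δ₂ → T δ₁ ⊆ T δ₂ := fun δ₁ δ₂ h =>
    inter_subset_inter_right _ (fun x hx => le_trans hx h)
  have hTfin : ∀ δ, volume (T δ) ≠ ∞ := fun δ =>
    ((measure_mono (inter_subset_left.trans subset_closure)).trans_lt
      hAb.closure.measure_lt_top).ne
  -- measure of the collar tends to 0
  have hInter : (⋂ n : ℕ, T (1 / (n + 1))) ⊆ frontier A := by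
    intro x hx
    have hxA : x ∈ A := (mem_iInter.1 hx 0).1
    have hx0 : infDist x Aᶜ = 0 := by
      by_contra h0
      have hpos : 0 < infDist x Aᶜ := lt_of_le_of_ne infDist_nonneg (Ne.symm h0)
      obtain ⟨n, hn⟩ := exists_nat_one_div_lt hpos
      exact absurd ((mem_iInter.1 hx n).2) (not_le.2 hn)
    have hxcl : x ∈ closure Aᶜ := (mem_closure_iff_infDist_zero hAc).2 hx0
    rw [closure_compl] at hxcl
    exact ⟨subset_closure hxA, hxcl⟩
  have hmeas0 : Tendsto (fun n : ℕ => volume (T (1 / (n + 1)))) atTop (𝓝 0) := by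
    have h := tendsto_measure_iInter_atTop (μ := volume)
      (s := fun n : ℕ => T (1 / (n + 1)))
      (fun n => (hTmeas _).nullMeasurableSet)
      (fun m n hmn => hTmono (by
        have : (m : ℝ) + 1 ≤ (n : ℝ) + 1 := by exact_mod_cast Nat.succ_le_succ hmn
        exact one_div_le_one_div_of_le (by positivity) this))
      ⟨0, hTfin _⟩
    have h0 : volume (⋂ n : ℕ, T (1 / (n + 1))) = 0 :=
      measure_mono_null hInter hAf
    rwa [h0] at h
  -- countably many bad levels
  have hcount : Set.Countable
      {t : ℝ | 0 < volume.restrict (closure A) {x : EuclideanSpace ℝ (Fin d) | infDist x Aᶜ = t}} :=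
    MeasureTheory.Measure.countable_meas_level_set_pos
      ((continuous_infDist_pt Aᶜ).measurable)
  -- prove the limit via ε-characterization
  rw [NormedAddCommGroup.tendsto_nhds_zero]
  intro η hη
  -- choose δ₁ > 0 with L * vol (T δ₁) < η
  obtain ⟨n, hn⟩ : ∃ n : ℕ, L * (volume (T (1 / (n + 1)))).toReal < η := by
    have h := hmeas0.eventually_lt_const
      (show (0:ℝ≥0∞) < ENNReal.ofReal (η / (L + 1)) by positivity)
    obtain ⟨n, hn⟩ := h.exists
    refine ⟨n, ?_⟩
    have ht : (volume (T (1 / (n + 1)))).toReal < η / (L + 1) :=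
      ENNReal.toReal_lt_of_lt_ofReal hn
    have h0 : 0 ≤ (volume (T (1 / (n + 1)))).toReal := ENNReal.toReal_nonneg
    have hL1 : (0:ℝ) < L + 1 := by linarith
    have h2 : (volume (T (1 / (n + 1)))).toReal * (L + 1) < η := (lt_div_iff₀ hL1).1 ht
    nlinarith
  set δ₁ : ℝ := 1 / (n + 1) with hδ₁
  have hδ₁pos : 0 < δ₁ := by positivity
  -- choose good δ ∈ (0, δ₁) avoiding the countable bad set
  obtain ⟨δ, hδmem, hδgood⟩ :
      ∃ δ, δ ∈ Ioo (0:ℝ) δ₁ ∧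
        δ ∉ {t : ℝ | 0 < volume.restrict (closure A) {x : EuclideanSpace ℝ (Fin d) | infDist x Aᶜ = t}} := by
    by_contra h
    push_neg at h
    have hsub : Ioo (0:ℝ) δ₁ ⊆
        {t : ℝ | 0 < volume.restrict (closure A) {x : EuclideanSpace ℝ (Fin d) | infDist x Aᶜ = t}} :=
      fun t ht => h t ht
    have h0 := measure_mono_null hsub (hcount.measure_zero volume)
    rw [Real.volume_Ioo, sub_zero, ENNReal.ofReal_eq_zero] at h0
    linarith
  obtain ⟨hδpos, hδlt⟩ := hδmem
  -- T δ is a continuity set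
  have hfront : volume (frontier (T δ)) = 0 := by
    have h1 : frontier (T δ) ⊆
        frontier A ∪ (closure A ∩ {x : EuclideanSpace ℝ (Fin d) | infDist x Aᶜ = δ}) := by
      refine (frontier_inter_subset _ _).trans ?_
      apply union_subset_union
      · exact inter_subset_left
      · exact inter_subset_inter_right _
          (frontier_le_subset_eq (continuous_infDist_pt Aᶜ) continuous_const)
    refine measure_mono_null h1 ?_
    refine measure_union_null hAf ?_
    have := hδgood
    simp only [mem_setOf_eq, not_lt, le_zero_iff, Measure.restrict_apply'
      (isClosed_closure (s := A)).measurableSet] at this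
    rwa [inter_comm]
  -- apply the hypothesis to T δ
  have hg := hconv (T δ) (hTmeas δ) (hTbd δ) hfront
  have hvol : L * (volume (T δ)).toReal < η := by
    refine lt_of_le_of_lt ?_ hn
    apply mul_le_mul_of_nonneg_left _ hL
    exact ENNReal.toReal_mono (hTfin _) (measure_mono (hTmono hδlt.le))
  have hev1 : ∀ᶠ ε in 𝓝[>] (0:ℝ),
      ε ^ d * ((Φ ∩ ε⁻¹ • T δ).ncard : ℝ) < η := hg.eventually_lt_const hvol
  have hev2 : Ioc (0:ℝ) δ ∈ 𝓝[>] (0:ℝ) := Ioc_mem_nhdsGT_of_mem ⟨le_rfl, hδpos⟩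
  filter_upwards [hev1, hev2] with ε h1 h2
  obtain ⟨hεpos, hεle⟩ := h2
  have hεne : ε ≠ 0 := ne_of_gt hεpos
  -- the squeeze
  have hsub : {z ∈ Φ | ε • z ∈ A ∧ infDist (ε • z) Aᶜ ≤ ε} ⊆ Φ ∩ ε⁻¹ • T δ := by
    intro z hz
    obtain ⟨hzΦ, hzA, hzd⟩ := hz
    refine ⟨hzΦ, ?_⟩
    rw [mem_inv_smul_set_iff₀ hεne]
    exact ⟨hzA, le_trans hzd hεle⟩
  have hfin : (Φ ∩ ε⁻¹ • T δ).Finite := hΦ _ ((hTbd δ).smul₀ ε⁻¹)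
  have hcard : (({z ∈ Φ | ε • z ∈ A ∧ infDist (ε • z) Aᶜ ≤ ε}).ncard : ℝ)
      ≤ ((Φ ∩ ε⁻¹ • T δ).ncard : ℝ) := by
    exact_mod_cast Set.ncard_le_ncard hsub hfin
  have hnng : 0 ≤ ε ^ d * (({z ∈ Φ | ε • z ∈ A ∧ infDist (ε • z) Aᶜ ≤ ε}).ncard : ℝ) := by
    positivity
  rw [Real.norm_of_nonneg hnng]
  calc ε ^ d * (({z ∈ Φ | ε • z ∈ A ∧ infDist (ε • z) Aᶜ ≤ ε}).ncard : ℝ)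
      ≤ ε ^ d * ((Φ ∩ ε⁻¹ • T δ).ncard : ℝ) := by
        exact mul_le_mul_of_nonneg_left hcard (by positivity)
    _ < η := h1
end

section
/- Let d ≥ 1, let Φ ⊆ ℝ^d be locally finite, let h : Φ → [0, ∞), and let c ∈ [0, ∞). Suppose that for every half-open box I = Π_{i=1}^d [a_i, b_i) with −∞ < a_i < b_i < ∞, one has n^{-d} Σ_{z ∈ Φ ∩ nI} h(z) → c·|I| as n → ∞ through the positive integers. Then for every bounded Borel set B ⊆ ℝ^d whose topological boundary has Lebesgue measure zero, ε^d Σ_{z ∈ Φ ∩ ε^{-1}B} h(z) → c·|B| as ε → 0 through positive real numbers. -/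
/-!
Write the rescaled sum as `x⁻ᵈ ∑_{z ∈ Φ ∩ x • S} h z` with `x = ε⁻¹ → ∞`; since `h ≥ 0` it is
monotone in `S`. For a box `S`, the set `x • S` lies between `⌊x⌋₊ • U` and `⌈x⌉₊ • V` for boxes
`U ⊆ S ⊆ V` slightly shrunk and enlarged, so the limits along integers give the limit along
reals. Limits add up over finite disjoint unions of boxes. A bounded set `B` lies between two
unions of grid cubes of side `s` whose difference lies in the `√d s`-neighbourhood of the frontier
of `B` (a cube meeting both `B` and its complement is connected, so it meets the frontier), and
the volume of that neighbourhood tends to the volume of the frontier, which is zero.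
-/

open MeasureTheory Filter Topology Metric Set
open scoped ENNReal Pointwise

theorem IsPreconnected.inter_frontier_nonempty {X : Type*} [TopologicalSpace X] {s t : Set X}
    (hs : IsPreconnected s) (hst : (s ∩ t).Nonempty) (hst' : (s \ t).Nonempty) :
    (s ∩ frontier t).Nonempty := by
  have := isPreconnected_iff_preconnectedSpace.1 hs
  obtain ⟨x, hx⟩ : (frontier ((↑) ⁻¹' t : Set s)).Nonempty := by
    refine nonempty_frontier_iff.2 ⟨?_, fun h => ?_⟩
    · obtain ⟨x, hxs, hxt⟩ := hst
      exact ⟨⟨x, hxs⟩, hxt⟩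
    · obtain ⟨x, hxs, hxt⟩ := hst'
      exact hxt (h.symm ▸ mem_univ (⟨x, hxs⟩ : s) :)
  exact ⟨x, x.2, continuous_subtype_val.frontier_preimage_subset t hx⟩

theorem tendsto_of_forall_sandwich {α : Type*} {l : Filter α} {f : α → ℝ} {L : ℝ}
    (H : ∀ δ > 0, ∃ g₁ g₂ : α → ℝ, ∃ L₁ L₂ : ℝ, Tendsto g₁ l (𝓝 L₁) ∧ Tendsto g₂ l (𝓝 L₂) ∧
      |L₁ - L| < δ ∧ |L₂ - L| < δ ∧ g₁ ≤ᶠ[l] f ∧ f ≤ᶠ[l] g₂) :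
    Tendsto f l (𝓝 L) := by
  refine Metric.tendsto_nhds.2 fun δ hδ => ?_
  obtain ⟨g₁, g₂, L₁, L₂, hg₁, hg₂, hL₁, hL₂, hf₁, hf₂⟩ := H (δ / 2) (half_pos hδ)
  filter_upwards [Metric.tendsto_nhds.1 hg₁ _ (half_pos hδ),
    Metric.tendsto_nhds.1 hg₂ _ (half_pos hδ), hf₁, hf₂] with x h₁ h₂ h₃ h₄
  simp only [Real.dist_eq, abs_lt] at *
  constructor <;> linarith

theorem tendsto_inv_pow_mul_comp_of_tendsto_nat {d : ℕ} {u : ℕ → ℝ} {L : ℝ} {m : ℝ → ℕ}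
    (hu : Tendsto (fun n : ℕ => ((n : ℝ) ^ d)⁻¹ * u n) atTop (𝓝 L))
    (hm : Tendsto m atTop atTop) (hm_div : Tendsto (fun x => (m x : ℝ) / x) atTop (𝓝 1)) :
    Tendsto (fun x : ℝ => (x ^ d)⁻¹ * u (m x)) atTop (𝓝 L) := by
  have hlim := (hm_div.pow d).mul (hu.comp hm)
  rw [one_pow, one_mul] at hlim
  refine hlim.congr' ?_
  filter_upwards [hm.eventually_ne_atTop 0, eventually_ne_atTop 0] with x hmx hx
  have hmx : (m x : ℝ) ≠ 0 := Nat.cast_ne_zero.2 hmx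
  simp only [Function.comp_apply, div_pow]
  field_simp

section WeightedSum

variable {E : Type*} {Φ : Set E} {h : E → ℝ}

theorem finsum_mem_inter_mono (hh : ∀ z ∈ Φ, 0 ≤ h z) {S T : Set E} (hT : (Φ ∩ T).Finite)
    (hST : S ⊆ T) : ∑ᶠ z ∈ Φ ∩ S, h z ≤ ∑ᶠ z ∈ Φ ∩ T, h z := by
  have hS : (Φ ∩ S).Finite := hT.subset (inter_subset_inter_right _ hST)
  rw [finsum_mem_eq_finite_toFinset_sum _ hS, finsum_mem_eq_finite_toFinset_sum _ hT]
  refine Finset.sum_le_sum_of_subset_of_nonneg ?_ fun z hz _ => hh z ?_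
  · simpa using inter_subset_inter_right Φ hST
  · exact ((Finite.mem_toFinset _).1 hz).1

theorem finsum_mem_inter_biUnion {ι : Type*} {T : Finset ι} {S : ι → Set E}
    (hdisj : (T : Set ι).PairwiseDisjoint S) (hfin : ∀ i ∈ T, (Φ ∩ S i).Finite) :
    ∑ᶠ z ∈ Φ ∩ ⋃ i ∈ T, S i, h z = ∑ i ∈ T, ∑ᶠ z ∈ Φ ∩ S i, h z := by
  rw [inter_iUnion₂, ← Finset.set_biUnion_coe, finsum_mem_biUnion _ T.finite_toSet hfin,
    finsum_mem_coe_finset]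
  exact hdisj.mono fun i => inter_subset_right

end WeightedSum

noncomputable def scaledMass {E : Type*} [SMul ℝ E] (Φ : Set E) (h : E → ℝ) (d : ℕ) (x : ℝ)
    (S : Set E) : ℝ :=
  (x ^ d)⁻¹ * ∑ᶠ z ∈ Φ ∩ x • S, h z

section ScaledMass

variable {E : Type*} [NormedAddCommGroup E] [NormedSpace ℝ E] {Φ : Set E} {h : E → ℝ} {d : ℕ}

theorem eventually_smul_subset_smul_thickening {α : Type*} {l : Filter α} {u v : α → ℝ}
    (huv : Tendsto (fun x => u x / v x) l (𝓝 1)) (hv : ∀ᶠ x in l, v x ≠ 0) {S : Set E}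
    (hS : Bornology.IsBounded S) {r : ℝ} (hr : 0 < r) :
    ∀ᶠ x in l, u x • S ⊆ v x • thickening r S := by
  obtain ⟨C, hC⟩ := isBounded_iff_forall_norm_le.1 hS
  have hsmall : ∀ᶠ t in 𝓝 (1 : ℝ), |t - 1| * C < r := by
    have : Tendsto (fun t : ℝ => |t - 1| * C) (𝓝 1) (𝓝 0) :=
      ((continuous_abs.comp (continuous_sub_right 1)).mul continuous_const).tendsto' 1 0
        (by simp)
    exact this.eventually (gt_mem_nhds hr)
  filter_upwards [huv.eventually hsmall, hv] with x hx hvx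
  rintro _ ⟨y, hy, rfl⟩
  refine ⟨(u x / v x) • y, mem_thickening_iff.2 ⟨y, hy, ?_⟩, ?_⟩
  · calc dist ((u x / v x) • y) y = |u x / v x - 1| * ‖y‖ := by
          rw [dist_eq_norm, ← Real.norm_eq_abs, ← norm_smul, sub_smul, one_smul]
      _ ≤ |u x / v x - 1| * C := by gcongr; exact hC y hy
      _ < r := hx
  · simp only [smul_smul, mul_div_cancel₀ _ hvx]

theorem scaledMass_mono (hh : ∀ z ∈ Φ, 0 ≤ h z) {x : ℝ} (hx : 0 ≤ x) {S T : Set E}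
    (hT : (Φ ∩ x • T).Finite) (hST : S ⊆ T) : scaledMass Φ h d x S ≤ scaledMass Φ h d x T :=
  mul_le_mul_of_nonneg_left (finsum_mem_inter_mono hh hT (smul_set_mono hST)) (by positivity)

theorem tendsto_scaledMass_biUnion
    (hΦ : ∀ B : Set E, Bornology.IsBounded B → (Φ ∩ B).Finite) {ι : Type*} {T : Finset ι}
    {S : ι → Set E} (hS : ∀ i ∈ T, Bornology.IsBounded (S i))
    (hdisj : (T : Set ι).PairwiseDisjoint S) {L : ι → ℝ}
    (hL : ∀ i ∈ T, Tendsto (fun x => scaledMass Φ h d x (S i)) atTop (𝓝 (L i))) :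
    Tendsto (fun x => scaledMass Φ h d x (⋃ i ∈ T, S i)) atTop (𝓝 (∑ i ∈ T, L i)) := by
  refine (tendsto_finsetSum T hL).congr' ?_
  filter_upwards [eventually_ne_atTop 0] with x hx
  have hdisj' : (T : Set ι).PairwiseDisjoint fun i => x • S i :=
    fun i hi j hj hij => by
      simpa only [← image_smul] using
        disjoint_image_of_injective (smul_right_injective E hx) (hdisj hi hj hij)
  rw [scaledMass, smul_set_iUnion₂, finsum_mem_inter_biUnion hdisj'
    fun i hi => hΦ _ ((hS i hi).smul₀ x), Finset.mul_sum]
  rfl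

theorem tendsto_scaledMass_of_tendsto_nat
    (hΦ : ∀ B : Set E, Bornology.IsBounded B → (Φ ∩ B).Finite) (hh : ∀ z ∈ Φ, 0 ≤ h z)
    {S : Set E} (hS : Bornology.IsBounded S) {U V : ℝ → Set E} {LU LV : ℝ → ℝ} {L : ℝ}
    (hU : ∀ᶠ r in 𝓝[>] 0, thickening r (U r) ⊆ S ∧ Bornology.IsBounded (U r) ∧
      Tendsto (fun n : ℕ => scaledMass Φ h d n (U r)) atTop (𝓝 (LU r)))
    (hV : ∀ᶠ r in 𝓝[>] 0, thickening r S ⊆ V r ∧ Bornology.IsBounded (V r) ∧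
      Tendsto (fun n : ℕ => scaledMass Φ h d n (V r)) atTop (𝓝 (LV r)))
    (hLU : Tendsto LU (𝓝[>] 0) (𝓝 L)) (hLV : Tendsto LV (𝓝[>] 0) (𝓝 L)) :
    Tendsto (fun x => scaledMass Φ h d x S) atTop (𝓝 L) := by
  refine tendsto_of_forall_sandwich fun δ hδ => ?_
  have hclose {L' : ℝ → ℝ} (hL' : Tendsto L' (𝓝[>] 0) (𝓝 L)) : ∀ᶠ r in 𝓝[>] 0, |L' r - L| < δ :=
    (Metric.tendsto_nhds.1 hL' δ hδ).mono fun r hr => by rwa [← Real.dist_eq]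
  obtain ⟨r, ⟨⟨⟨hUS, hUb, hUlim⟩, ⟨hSV, hVb, hVlim⟩⟩, hLUr, hLVr⟩, hr⟩ :=
    (((hU.and hV).and ((hclose hLU).and (hclose hLV))).and self_mem_nhdsWithin).exists
  refine ⟨fun x => (x ^ d)⁻¹ * ∑ᶠ z ∈ Φ ∩ (⌊x⌋₊ : ℝ) • U r, h z,
    fun x => (x ^ d)⁻¹ * ∑ᶠ z ∈ Φ ∩ (⌈x⌉₊ : ℝ) • V r, h z, LU r, LV r,
    tendsto_inv_pow_mul_comp_of_tendsto_nat hUlim tendsto_nat_floor_atTop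
      tendsto_nat_floor_div_atTop,
    tendsto_inv_pow_mul_comp_of_tendsto_nat hVlim tendsto_nat_ceil_atTop
      tendsto_nat_ceil_div_atTop, hLUr, hLVr, ?_, ?_⟩
  · filter_upwards [eventually_smul_subset_smul_thickening tendsto_nat_floor_div_atTop
      (eventually_ne_atTop 0) hUb hr, eventually_ge_atTop 0] with x hx hx0
    exact mul_le_mul_of_nonneg_left (finsum_mem_inter_mono hh (hΦ _ (hS.smul₀ x))
      (hx.trans (smul_set_mono hUS))) (by positivity)
  · have hdiv : Tendsto (fun x : ℝ => x / ⌈x⌉₊) atTop (𝓝 1) := by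
      simpa only [inv_div, inv_one] using (tendsto_nat_ceil_div_atTop (R := ℝ)).inv₀ one_ne_zero
    filter_upwards [eventually_smul_subset_smul_thickening hdiv
      ((eventually_gt_atTop 0).mono fun x hx => by positivity) hS hr,
      eventually_ge_atTop 0] with x hx hx0
    exact mul_le_mul_of_nonneg_left (finsum_mem_inter_mono hh (hΦ _ (hVb.smul₀ _))
      (hx.trans (smul_set_mono hSV))) (by positivity)

theorem tendsto_scaledMass_of_approx [MeasurableSpace E] {μ : Measure E}
    (hΦ : ∀ B : Set E, Bornology.IsBounded B → (Φ ∩ B).Finite) (hh : ∀ z ∈ Φ, 0 ≤ h z)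
    {c : ℝ} {B : Set E} (hB : Bornology.IsBounded B)
    (happrox : ∀ η > 0, ∃ U V : Set E, U ⊆ B ∧ B ⊆ V ∧ Bornology.IsBounded V ∧ μ V ≠ ∞ ∧
      μ.real V < μ.real U + η ∧
      Tendsto (fun x => scaledMass Φ h d x U) atTop (𝓝 (c * μ.real U)) ∧
      Tendsto (fun x => scaledMass Φ h d x V) atTop (𝓝 (c * μ.real V))) :
    Tendsto (fun x => scaledMass Φ h d x B) atTop (𝓝 (c * μ.real B)) := by
  refine tendsto_of_forall_sandwich fun δ hδ => ?_
  obtain ⟨U, V, hUB, hBV, hVb, hV, hUV, hUlim, hVlim⟩ := happrox (δ / (|c| + 1)) (by positivity)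
  have hUB' : μ.real U ≤ μ.real B := measureReal_mono hUB (measure_ne_top_of_subset hBV hV)
  have hBV' : μ.real B ≤ μ.real V := measureReal_mono hBV hV
  have hclose (W : ℝ) (hUW : μ.real U ≤ W) (hWV : W ≤ μ.real V) :
      |c * W - c * μ.real B| < δ := by
    rw [← mul_sub, abs_mul]
    calc |c| * |W - μ.real B| ≤ |c| * (δ / (|c| + 1)) := by
          gcongr; rw [abs_le]; constructor <;> linarith
      _ < (|c| + 1) * (δ / (|c| + 1)) := by gcongr; linarith
      _ = δ := mul_div_cancel₀ _ (by positivity)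
  refine ⟨_, _, _, _, hUlim, hVlim, hclose _ le_rfl (hUB'.trans hBV'),
    hclose _ (hUB'.trans hBV') le_rfl, ?_, ?_⟩ <;>
  filter_upwards [eventually_ge_atTop 0] with x hx
  · exact scaledMass_mono hh hx (hΦ _ (hB.smul₀ x)) hUB
  · exact scaledMass_mono hh hx (hΦ _ (hVb.smul₀ x)) hBV

end ScaledMass

section Boxes

variable {d : ℕ}

def box (a b : Fin d → ℝ) : Set (EuclideanSpace ℝ (Fin d)) :=
  {x | ∀ i, x i ∈ Ico (a i) (b i)}

theorem box_eq_preimage (a b : Fin d → ℝ) :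
    box a b = WithLp.ofLp ⁻¹' univ.pi fun i => Ico (a i) (b i) := by
  ext x; simp [box]

theorem measurableSet_box (a b : Fin d → ℝ) : MeasurableSet (box a b) := by
  rw [box_eq_preimage]
  exact (PiLp.volume_preserving_ofLp (Fin d)).measurable
    (MeasurableSet.univ_pi fun _ => measurableSet_Ico)

theorem volume_real_box {a b : Fin d → ℝ} (hab : ∀ i, a i ≤ b i) :
    volume.real (box a b) = ∏ i, (b i - a i) := by
  rw [measureReal_def, box_eq_preimage, (PiLp.volume_preserving_ofLp (Fin d)).measure_preimage
      (MeasurableSet.univ_pi fun _ => measurableSet_Ico).nullMeasurableSet,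
    volume_pi_pi, ENNReal.toReal_prod]
  exact Finset.prod_congr rfl fun i _ => by simp [Real.volume_Ico, sub_nonneg.2 (hab i)]

theorem isBounded_box (a b : Fin d → ℝ) : Bornology.IsBounded (box a b) := by
  have := (EuclideanSpace.equiv (Fin d) ℝ).symm.lipschitz.isBounded_image
    (Bornology.IsBounded.pi fun i => isBounded_Ico (a i) (b i))
  rw [ContinuousLinearEquiv.image_symm_eq_preimage] at this
  rwa [box_eq_preimage]

theorem convex_box (a b : Fin d → ℝ) : Convex ℝ (box a b) := by
  rw [box_eq_preimage]
  exact (convex_pi fun i _ => convex_Ico (a i) (b i)).linear_preimage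
    (WithLp.linearEquiv 2 ℝ (Fin d → ℝ)).toLinearMap

theorem thickening_box_subset (a b : Fin d → ℝ) (r : ℝ) :
    thickening r (box a b) ⊆ box (fun i => a i - r) (fun i => b i + r) := by
  intro y hy i
  obtain ⟨x, hx, hxy⟩ := mem_thickening_iff.1 hy
  have hi : |y i - x i| < r := by
    rw [← Real.dist_eq]
    exact (PiLp.dist_apply_le y x i).trans_lt (dist_comm x y ▸ hxy)
  obtain ⟨h₁, h₂⟩ := hx i
  rw [abs_lt] at hi
  constructor <;> linarith

end Boxes

section BoxLimits

variable {d : ℕ} {Φ : Set (EuclideanSpace ℝ (Fin d))} {h : EuclideanSpace ℝ (Fin d) → ℝ}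
  {c : ℝ}

theorem tendsto_scaledMass_box
    (hΦ : ∀ B, Bornology.IsBounded B → (Φ ∩ B).Finite) (hh : ∀ z ∈ Φ, 0 ≤ h z)
    (hbox : ∀ a b : Fin d → ℝ, (∀ i, a i < b i) →
      Tendsto (fun n : ℕ => scaledMass Φ h d n (box a b)) atTop
        (𝓝 (c * volume.real (box a b))))
    {a b : Fin d → ℝ} (hab : ∀ i, a i < b i) :
    Tendsto (fun x => scaledMass Φ h d x (box a b)) atTop (𝓝 (c * volume.real (box a b))) := by
  have hbox' {a b : Fin d → ℝ} (hab : ∀ i, a i < b i) :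
      Tendsto (fun n : ℕ => scaledMass Φ h d n (box a b)) atTop (𝓝 (c * ∏ i, (b i - a i))) :=
    volume_real_box (fun i => (hab i).le) ▸ hbox a b hab
  have hcont (g : ℝ → Fin d → ℝ) (hg : Continuous g) (hg0 : g 0 = fun i => b i - a i) :
      Tendsto (fun r => c * ∏ i, g r i) (𝓝[>] 0) (𝓝 (c * ∏ i, (b i - a i))) :=
    (Continuous.tendsto' (by fun_prop) 0 _ (by simp [hg0])).mono_left nhdsWithin_le_nhds
  have hsmall : ∀ᶠ r in 𝓝[>] (0 : ℝ), ∀ i, a i + r < b i - r :=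
    (eventually_all.2 fun i => (gt_mem_nhds (half_pos (sub_pos.2 (hab i)))).mono
      fun r hr => by linarith).filter_mono nhdsWithin_le_nhds
  rw [volume_real_box fun i => (hab i).le]
  refine tendsto_scaledMass_of_tendsto_nat hΦ hh (isBounded_box a b)
    (U := fun r => box (fun i => a i + r) (fun i => b i - r))
    (V := fun r => box (fun i => a i - r) (fun i => b i + r)) ?_ ?_
    (hcont (fun r i => b i - r - (a i + r)) (by fun_prop) (by simp))
    (hcont (fun r i => b i + r - (a i - r)) (by fun_prop) (by simp))
  · filter_upwards [hsmall] with r hr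
    refine ⟨?_, isBounded_box _ _, hbox' hr⟩
    simpa using thickening_box_subset (fun i => a i + r) (fun i => b i - r) r
  · filter_upwards [self_mem_nhdsWithin] with r (hr : 0 < r)
    refine ⟨thickening_box_subset a b r, isBounded_box _ _, hbox' fun i => ?_⟩
    linarith [hab i]

end BoxLimits

section Grid

variable {d : ℕ} {s : ℝ}

def gridCube (s : ℝ) (z : Fin d → ℤ) : Set (EuclideanSpace ℝ (Fin d)) :=
  box (fun i => s * z i) (fun i => s * (z i + 1))

theorem mem_gridCube_iff (hs : 0 < s) {z : Fin d → ℤ} {x : EuclideanSpace ℝ (Fin d)} :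
    x ∈ gridCube s z ↔ ∀ i, ⌊x i / s⌋ = z i := by
  simp only [gridCube, box, mem_ofPred_eq, mem_Ico, Int.floor_eq_iff, le_div_iff₀ hs,
    div_lt_iff₀ hs, mul_comm s]

theorem mem_gridCube_floor (hs : 0 < s) (x : EuclideanSpace ℝ (Fin d)) :
    x ∈ gridCube s fun i => ⌊x i / s⌋ :=
  (mem_gridCube_iff hs).2 fun _ => rfl

theorem pairwise_disjoint_gridCube (hs : 0 < s) :
    Pairwise (Function.onFun Disjoint (gridCube (d := d) s)) :=
  fun _ _ hzz' => disjoint_left.2 fun _ hx hx' => hzz' <| funext fun i =>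
    ((mem_gridCube_iff hs).1 hx i).symm.trans ((mem_gridCube_iff hs).1 hx' i)

theorem dist_le_of_mem_gridCube (hs : 0 ≤ s) {z : Fin d → ℤ} {x y : EuclideanSpace ℝ (Fin d)}
    (hx : x ∈ gridCube s z) (hy : y ∈ gridCube s z) : dist x y ≤ √d * s := by
  have hi (i : Fin d) : dist (x i) (y i) ^ 2 ≤ s ^ 2 := by
    obtain ⟨hx₁, hx₂⟩ := hx i
    obtain ⟨hy₁, hy₂⟩ := hy i
    refine pow_le_pow_left₀ dist_nonneg ?_ 2
    rw [Real.dist_eq, abs_le]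
    constructor <;> linarith
  calc dist x y = √(∑ i, dist (x i) (y i) ^ 2) := EuclideanSpace.dist_eq x y
    _ ≤ √(∑ _i : Fin d, s ^ 2) := Real.sqrt_le_sqrt (Finset.sum_le_sum fun i _ => hi i)
    _ = √d * s := by simp [Real.sqrt_sq hs]

theorem finite_setOf_gridCube_inter_nonempty (hs : 0 < s) {B : Set (EuclideanSpace ℝ (Fin d))}
    (hB : Bornology.IsBounded B) : {z | (gridCube s z ∩ B).Nonempty}.Finite := by
  obtain ⟨C, hC⟩ := isBounded_iff_forall_norm_le.1 hB
  refine (finite_Icc (fun _ => ⌊-C / s⌋) (fun _ => ⌊C / s⌋)).subset ?_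
  rintro z ⟨x, hxz, hxB⟩
  have hxi (i : Fin d) : |x i| ≤ C := (PiLp.norm_apply_le x i).trans (hC x hxB)
  constructor <;> intro i <;> rw [← (mem_gridCube_iff hs).1 hxz i]
  · show ⌊-C / s⌋ ≤ ⌊x i / s⌋
    gcongr; linarith [abs_le.1 (hxi i)]
  · show ⌊x i / s⌋ ≤ ⌊C / s⌋
    gcongr; linarith [abs_le.1 (hxi i)]

def gridUnion (s : ℝ) (T : Finset (Fin d → ℤ)) : Set (EuclideanSpace ℝ (Fin d)) :=
  ⋃ z ∈ T, gridCube s z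

theorem isBounded_gridUnion (s : ℝ) (T : Finset (Fin d → ℤ)) :
    Bornology.IsBounded (gridUnion s T) :=
  (Bornology.isBounded_biUnion_finset T).2 fun _ _ => isBounded_box _ _

theorem measurableSet_gridUnion (s : ℝ) (T : Finset (Fin d → ℤ)) :
    MeasurableSet (gridUnion s T) :=
  Finset.measurableSet_biUnion T fun _ _ => measurableSet_box _ _

theorem tendsto_scaledMass_gridUnion {Φ : Set (EuclideanSpace ℝ (Fin d))}
    {h : EuclideanSpace ℝ (Fin d) → ℝ} {c : ℝ}
    (hΦ : ∀ B, Bornology.IsBounded B → (Φ ∩ B).Finite) (hh : ∀ z ∈ Φ, 0 ≤ h z)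
    (hbox : ∀ a b : Fin d → ℝ, (∀ i, a i < b i) →
      Tendsto (fun n : ℕ => scaledMass Φ h d n (box a b)) atTop
        (𝓝 (c * volume.real (box a b))))
    (hs : 0 < s) (T : Finset (Fin d → ℤ)) :
    Tendsto (fun x => scaledMass Φ h d x (gridUnion s T)) atTop
      (𝓝 (c * volume.real (gridUnion s T))) := by
  have hdisj := (pairwise_disjoint_gridCube (d := d) hs).pairwiseDisjoint T
  rw [gridUnion, measureReal_biUnion_finset hdisj (fun _ _ => measurableSet_box _ _)
    (fun _ _ => (isBounded_box _ _).measure_lt_top.ne), Finset.mul_sum]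
  exact tendsto_scaledMass_biUnion hΦ (fun _ _ => isBounded_box _ _) hdisj fun z _ =>
    tendsto_scaledMass_box hΦ hh hbox fun i => by gcongr; linarith

theorem exists_gridUnion_sandwich (hs : 0 < s) {B : Set (EuclideanSpace ℝ (Fin d))}
    (hB : Bornology.IsBounded B) :
    ∃ T T' : Finset (Fin d → ℤ), gridUnion s T ⊆ B ∧ B ⊆ gridUnion s T' ∧
      gridUnion s T' \ gridUnion s T ⊆ cthickening (√d * s) (frontier B) := by
  classical
  have hfin := finite_setOf_gridCube_inter_nonempty hs hB
  refine ⟨hfin.toFinset.filter fun z => gridCube s z ⊆ B, hfin.toFinset, iUnion₂_subset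
    fun z hz => (Finset.mem_filter.1 hz).2, fun x hx => mem_iUnion₂.2 ⟨_,
      hfin.mem_toFinset.2 ⟨x, mem_gridCube_floor hs x, hx⟩, mem_gridCube_floor hs x⟩, ?_⟩
  rintro x ⟨hxT', hxT⟩
  obtain ⟨z, hz, hxz⟩ := mem_iUnion₂.1 hxT'
  have hzB : ¬gridCube s z ⊆ B := fun hzB =>
    hxT (mem_iUnion₂.2 ⟨z, Finset.mem_filter.2 ⟨hz, hzB⟩, hxz⟩)
  obtain ⟨y, hyz, hyB⟩ := (convex_box _ _).isPreconnected.inter_frontier_nonempty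
    (hfin.mem_toFinset.1 hz) (sdiff_nonempty.2 hzB)
  exact mem_cthickening_of_dist_le x y _ _ hyB (dist_le_of_mem_gridCube hs.le hxz hyz)

end Grid

section ContinuitySets

variable {d : ℕ} {B : Set (EuclideanSpace ℝ (Fin d))}

theorem exists_gridUnion_approx (hB : Bornology.IsBounded B) (hfr : volume (frontier B) = 0)
    {η : ℝ} (hη : 0 < η) : ∃ s > 0, ∃ T T' : Finset (Fin d → ℤ), gridUnion s T ⊆ B ∧
      B ⊆ gridUnion s T' ∧ volume.real (gridUnion s T') < volume.real (gridUnion s T) + η := by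
  have hK : Tendsto (fun s => volume (cthickening (√d * s) (frontier B))) (𝓝 0) (𝓝 0) := by
    have := tendsto_measure_cthickening_of_isClosed (μ := volume)
      ⟨1, one_pos, (hB.closure.subset frontier_subset_closure).cthickening.measure_lt_top.ne⟩
      isClosed_frontier
    rw [hfr] at this
    exact this.comp ((continuous_const_mul _).tendsto' 0 0 (mul_zero _))
  obtain ⟨s, hsη, hs⟩ := ((hK.eventually (gt_mem_nhds (ENNReal.ofReal_pos.2 hη))).filter_mono
    nhdsWithin_le_nhds |>.and (self_mem_nhdsWithin (s := Ioi 0))).exists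
  obtain ⟨T, T', hTB, hBT', hdiff⟩ := exists_gridUnion_sandwich hs hB
  refine ⟨s, hs, T, T', hTB, hBT', ?_⟩
  have hK_fin := (hB.closure.subset frontier_subset_closure).cthickening (δ := √d * s)
    |>.measure_lt_top (μ := volume)
  calc volume.real (gridUnion s T')
      = volume.real (gridUnion s T) + volume.real (gridUnion s T' \ gridUnion s T) := by
        rw [measureReal_sdiff (hTB.trans hBT') (measurableSet_gridUnion s T)
          ((isBounded_gridUnion s T').measure_lt_top.ne)]
        ring
    _ ≤ volume.real (gridUnion s T) + volume.real (cthickening (√d * s) (frontier B)) := by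
        gcongr; exact hK_fin.ne
    _ < volume.real (gridUnion s T) + η := by
        gcongr; exact ENNReal.toReal_lt_of_lt_ofReal hsη

theorem tendsto_scaledMass_of_volume_frontier_eq_zero {Φ : Set (EuclideanSpace ℝ (Fin d))}
    {h : EuclideanSpace ℝ (Fin d) → ℝ} {c : ℝ}
    (hΦ : ∀ B, Bornology.IsBounded B → (Φ ∩ B).Finite) (hh : ∀ z ∈ Φ, 0 ≤ h z)
    (hbox : ∀ a b : Fin d → ℝ, (∀ i, a i < b i) →
      Tendsto (fun n : ℕ => scaledMass Φ h d n (box a b)) atTop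
        (𝓝 (c * volume.real (box a b))))
    (hB : Bornology.IsBounded B) (hfr : volume (frontier B) = 0) :
    Tendsto (fun x => scaledMass Φ h d x B) atTop (𝓝 (c * volume.real B)) := by
  refine tendsto_scaledMass_of_approx hΦ hh hB fun η hη => ?_
  obtain ⟨s, hs, T, T', hTB, hBT', hvol⟩ := exists_gridUnion_approx hB hfr hη
  exact ⟨_, _, hTB, hBT', isBounded_gridUnion s T',
    (isBounded_gridUnion s T').measure_lt_top.ne, hvol,
    tendsto_scaledMass_gridUnion hΦ hh hbox hs T, tendsto_scaledMass_gridUnion hΦ hh hbox hs T'⟩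

end ContinuitySets

theorem stmt12_general {d : ℕ}
    (Φ : Set (EuclideanSpace ℝ (Fin d)))
    -- Φ is locally finite:
    (hΦ : ∀ B : Set (EuclideanSpace ℝ (Fin d)), Bornology.IsBounded B → (Φ ∩ B).Finite)
    (h : EuclideanSpace ℝ (Fin d) → ℝ) (hh : ∀ z ∈ Φ, 0 ≤ h z)
    (c : ℝ)
    -- n^{-d} Σ_{z ∈ Φ ∩ nI} h(z) → c·|I| for every half-open box I, along positive integers n:
    (hbox : ∀ a b : Fin d → ℝ, (∀ i, a i < b i) →
      Tendsto (fun n : ℕ =>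
          ((n : ℝ) ^ d)⁻¹ *
            ∑ᶠ z ∈ Φ ∩ (n : ℝ) •
              {x : EuclideanSpace ℝ (Fin d) | ∀ i, x i ∈ Set.Ico (a i) (b i)}, h z)
        atTop
        (𝓝 (c * (volume {x : EuclideanSpace ℝ (Fin d) | ∀ i, x i ∈ Set.Ico (a i) (b i)}).toReal))) :
    -- then ε^d Σ_{z ∈ Φ ∩ ε⁻¹B} h(z) → c·|B| for every bounded Borel continuity set B,
    -- along positive real ε → 0:
    ∀ B : Set (EuclideanSpace ℝ (Fin d)), MeasurableSet B → Bornology.IsBounded B →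
      volume (frontier B) = 0 →
      Tendsto (fun ε : ℝ => ε ^ d * ∑ᶠ z ∈ Φ ∩ ε⁻¹ • B, h z) (𝓝[>] (0:ℝ))
        (𝓝 (c * (volume B).toReal)) := by
  intro B _ hB hfr
  have hlim := tendsto_scaledMass_of_volume_frontier_eq_zero hΦ hh hbox hB hfr
  refine (hlim.comp tendsto_inv_nhdsGT_zero).congr fun ε => ?_
  simp [scaledMass, inv_pow]

theorem stmt12 {d : ℕ} (hd : 1 ≤ d)
    (Φ : Set (EuclideanSpace ℝ (Fin d)))
    -- Φ is locally finite:
    (hΦ : ∀ B : Set (EuclideanSpace ℝ (Fin d)), Bornology.IsBounded B → (Φ ∩ B).Finite)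
    (h : EuclideanSpace ℝ (Fin d) → ℝ) (hh : ∀ z ∈ Φ, 0 ≤ h z)
    (c : ℝ) (hc : 0 ≤ c)
    -- n^{-d} Σ_{z ∈ Φ ∩ nI} h(z) → c·|I| for every half-open box I, along positive integers n:
    (hbox : ∀ a b : Fin d → ℝ, (∀ i, a i < b i) →
      Tendsto (fun n : ℕ =>
          ((n : ℝ) ^ d)⁻¹ *
            ∑ᶠ z ∈ Φ ∩ (n : ℝ) •
              {x : EuclideanSpace ℝ (Fin d) | ∀ i, x i ∈ Set.Ico (a i) (b i)}, h z)
        atTop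
        (𝓝 (c * (volume {x : EuclideanSpace ℝ (Fin d) | ∀ i, x i ∈ Set.Ico (a i) (b i)}).toReal))) :
    -- then ε^d Σ_{z ∈ Φ ∩ ε⁻¹B} h(z) → c·|B| for every bounded Borel continuity set B,
    -- along positive real ε → 0:
    ∀ B : Set (EuclideanSpace ℝ (Fin d)), MeasurableSet B → Bornology.IsBounded B →
      volume (frontier B) = 0 →
      Tendsto (fun ε : ℝ => ε ^ d * ∑ᶠ z ∈ Φ ∩ ε⁻¹ • B, h z) (𝓝[>] (0:ℝ))
        (𝓝 (c * (volume B).toReal)) :=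
  stmt12_general Φ hΦ h hh c hbox
end
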